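/- arXiv:1904.10796 — 10 statements merged into one kernel-verified Lean document; each statement's English description precedes it below -/
import Mathlib

section
/- For two random points p_1, p_2 in [0,1)^d and boxes Q, R anchored at 1 (i.e., of the form [a,1) componentwise), the inequality P(p_1 ∈ Q, p_2 ∈ R) ≤ P(p_1 ∈ Q)P(p_2 ∈ R) holds for all such Q, R if and only if P(p_1 ∉ Q, p_2 ∉ R) ≤ P(p_1 ∉ Q)P(p_2 ∉ R) holds for all such Q, R, provided each p_i is uniformly distributed on [0,1)^d. -/
open MeasureTheory ProbabilityTheory

lemma compl_nd_iff {Ω : Type*} [MeasureSpace Ω] [IsProbabilityMeasure (ℙ : Measure Ω)]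
    {A B : Set Ω} (hA : MeasurableSet A) (hB : MeasurableSet B) :
    ℙ (A ∩ B) ≤ ℙ A * ℙ B ↔ ℙ (Aᶜ ∩ Bᶜ) ≤ ℙ Aᶜ * ℙ Bᶜ := by
  have hfin : ∀ s : Set Ω, ℙ s ≠ ⊤ := fun s => measure_ne_top _ _
  have hle1 : ∀ s : Set Ω, ℙ s ≤ 1 := fun s => prob_le_one
  have hcompl : ∀ s : Set Ω, MeasurableSet s → (ℙ sᶜ).toReal = 1 - (ℙ s).toReal := by
    intro s hs
    rw [measure_compl hs (hfin s), measure_univ, ENNReal.toReal_sub_of_le (hle1 s) ENNReal.one_ne_top]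
    simp
  have hie := measure_union_add_inter (μ := (ℙ : Measure Ω)) A hB
  have hieR : (ℙ (A ∪ B)).toReal + (ℙ (A ∩ B)).toReal = (ℙ A).toReal + (ℙ B).toReal := by
    rw [← ENNReal.toReal_add (hfin _) (hfin _), ← ENNReal.toReal_add (hfin _) (hfin _), hie]
  have hcc : Aᶜ ∩ Bᶜ = (A ∪ B)ᶜ := (Set.compl_union A B).symm
  rw [← ENNReal.toReal_le_toReal (hfin _) (ENNReal.mul_ne_top (hfin _) (hfin _)),
      ← ENNReal.toReal_le_toReal (hfin _) (ENNReal.mul_ne_top (hfin _) (hfin _)),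
      ENNReal.toReal_mul, ENNReal.toReal_mul, hcc,
      hcompl A hA, hcompl B hB, hcompl (A ∪ B) (hA.union hB)]
  constructor <;> intro h <;> nlinarith [hieR]

/-- For two random points uniformly distributed on `[0,1)^d`, the upper-orthant negative
dependence inequality holds for all boxes anchored at 1 iff the complementary inequality
does. -/
theorem stmt_2 {Ω : Type*} [MeasureSpace Ω] [IsProbabilityMeasure (ℙ : Measure Ω)]
    {d : ℕ} (p₁ p₂ : Ω → (Fin d → ℝ)) (h₁ : Measurable p₁) (h₂ : Measurable p₂)
    (hu₁ : Measure.map p₁ ℙ = Measure.pi fun _ => volume.restrict (Set.Ico (0 : ℝ) 1))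
    (hu₂ : Measure.map p₂ ℙ = Measure.pi fun _ => volume.restrict (Set.Ico (0 : ℝ) 1)) :
    (∀ a b : Fin d → ℝ, (∀ i, a i ∈ Set.Ico (0 : ℝ) 1) → (∀ i, b i ∈ Set.Ico (0 : ℝ) 1) →
        ℙ ({ω | ∀ i, p₁ ω i ∈ Set.Ico (a i) 1} ∩ {ω | ∀ i, p₂ ω i ∈ Set.Ico (b i) 1}) ≤
          ℙ {ω | ∀ i, p₁ ω i ∈ Set.Ico (a i) 1} * ℙ {ω | ∀ i, p₂ ω i ∈ Set.Ico (b i) 1}) ↔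
    (∀ a b : Fin d → ℝ, (∀ i, a i ∈ Set.Ico (0 : ℝ) 1) → (∀ i, b i ∈ Set.Ico (0 : ℝ) 1) →
        ℙ ({ω | ¬ ∀ i, p₁ ω i ∈ Set.Ico (a i) 1} ∩ {ω | ¬ ∀ i, p₂ ω i ∈ Set.Ico (b i) 1}) ≤
          ℙ {ω | ¬ ∀ i, p₁ ω i ∈ Set.Ico (a i) 1} *
            ℙ {ω | ¬ ∀ i, p₂ ω i ∈ Set.Ico (b i) 1}) := by
  have hmeas : ∀ (p : Ω → Fin d → ℝ), Measurable p → ∀ a : Fin d → ℝ,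
      MeasurableSet {ω | ∀ i, p ω i ∈ Set.Ico (a i) 1} := by
    intro p hp a
    have : {ω | ∀ i, p ω i ∈ Set.Ico (a i) 1} =
        p ⁻¹' (Set.univ.pi fun i => Set.Ico (a i) 1) := by
      ext ω; simp [Set.mem_pi]
    rw [this]
    exact hp (MeasurableSet.univ_pi fun i => measurableSet_Ico)
  have hc : ∀ (p : Ω → Fin d → ℝ) (a : Fin d → ℝ),
      {ω | ¬ ∀ i, p ω i ∈ Set.Ico (a i) 1} = {ω | ∀ i, p ω i ∈ Set.Ico (a i) 1}ᶜ := by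
    intro p a; rfl
  constructor <;> intro H a b ha hb
  · rw [hc, hc]
    exact (compl_nd_iff (hmeas p₁ h₁ a) (hmeas p₂ h₂ b)).mp (H a b ha hb)
  · have := H a b ha hb
    rw [hc, hc] at this
    exact (compl_nd_iff (hmeas p₁ h₁ a) (hmeas p₂ h₂ b)).mpr this
end

section
/- Let (B_j)_{j=1}^β be a partition of [0,1)^d into β ≥ N measurable sets of Lebesgue measure 1/β each, and let P = (p_1,...,p_N) be a generalized stratified sampling scheme based on this partition: a uniformly random N-element subset of strata is chosen, one point placed independently and uniformly in each chosen stratum, and the points are randomly permuted. Then for every measurable A ⊆ [0,1)^d and every 1 ≤ t ≤ N, P(p_1 ∈ A, ..., p_t ∈ A) ≤ λ^d(A)^t = ∏_{j=1}^t P(p_j ∈ A). -/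
/-!
Put `a j = λ(A | B j) = β λ(A ∩ B j)`. The probability that the first `t` points lie in `A` is the
average of `∏_{i<t} a (k i)` over injective `k : Fin t → Fin β`, that is `e_t(a) / C(β, t)`, while
`∑ a = β λ(A)`; so the claim is Maclaurin's inequality `e_t(a) / C(β, t) ≤ (e_1(a) / β) ^ t`.

With `P n = n! e_n(a)` and `Q n` the sum of `a (k 0) ^ 2 ∏_{i>0} a (k i)` over injective
`k : Fin (n + 1) → Fin β`: splitting `(∑ a) P (n + 1)` according to whether the added index is
fresh gives `(∑ a) P (n + 1) = (n + 1) Q n + P (n + 2)`, and AM-GM on the first two entries of the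
tuples counted by `P (n + 2)` gives `P (n + 2) ≤ (β - n - 1) Q n`. Together they yield the
Newton-type step `β P (n + 1) ≤ (β - n) (∑ a) P n`, whence `β ^ t P t ≤ β! / (β - t)! (∑ a) ^ t`.
-/

open MeasureTheory Finset Function
open scoped ENNReal Classical ProbabilityTheory

section EmbeddingSums

variable {ι M : Type*} [Fintype ι] [AddCommMonoid M]

lemma sum_filter_injective_eq_sum_embedding {α : Type*} [Fintype α] [DecidableEq α]
    [DecidablePred fun k : α → ι => Injective k] (f : (α → ι) → M) :
    ∑ k ∈ univ.filter (fun k : α → ι => Injective k), f k = ∑ e : α ↪ ι, f e := by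
  rw [sum_subtype _ fun k => by rw [mem_filter, and_iff_right (mem_univ k)]]
  exact Fintype.sum_equiv (Equiv.subtypeInjectiveEquivEmbedding α ι) _ _ fun _ => rfl

lemma card_filter_injective {α : Type*} [Fintype α] [DecidableEq α]
    [DecidablePred fun k : α → ι => Injective k] :
    #(univ.filter fun k : α → ι => Injective k) =
      (Fintype.card ι).descFactorial (Fintype.card α) := by
  rw [card_eq_sum_ones, sum_filter_injective_eq_sum_embedding fun _ => 1, sum_const, card_univ,
    Fintype.card_embedding_eq, smul_eq_mul, mul_one]

lemma sum_embedding_finSucc (n : ℕ) (F : ι → (Fin n ↪ ι) → M) :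
    ∑ e : Fin (n + 1) ↪ ι, F (e 0) ((Fin.succEmb n).trans e) =
      ∑ f : Fin n ↪ ι, ∑ x ∈ (univ.map f)ᶜ, F x f := by
  rw [Fintype.sum_equiv (Equiv.embeddingFinSucc n ι)
    (fun e => F (e 0) ((Fin.succEmb n).trans e)) (fun p => F p.2 p.1)
    fun e => congrArg _ (DFunLike.ext _ _ fun _ => rfl), Fintype.sum_sigma]
  refine sum_congr rfl fun f _ => ?_
  dsimp only
  exact (sum_subtype _ (fun x => by simp) (F · f)).symm

lemma sum_embedding_inl_trans {α β : Type*} [Fintype α] [Fintype β] (g : (α ↪ ι) → M) :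
    ∑ e : α ⊕ β ↪ ι, g (Embedding.inl.trans e) =
      (Fintype.card ι - Fintype.card α).descFactorial (Fintype.card β) • ∑ f : α ↪ ι, g f := by
  rw [Fintype.sum_equiv Equiv.sumEmbeddingEquivSigmaEmbeddingRestricted
    (fun e => g (Embedding.inl.trans e)) (fun p => g p.1) fun _ => rfl, Fintype.sum_sigma,
    smul_sum]
  refine sum_congr rfl fun f _ => ?_
  dsimp only
  rw [sum_const, card_univ, Fintype.card_embedding_eq, Fintype.card_compl_set,
    Set.card_range_of_injective f.injective]

lemma sum_embedding_castLEEmb_trans {t n : ℕ} (h : t ≤ n) (g : (Fin t ↪ ι) → M) :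
    ∑ e : Fin n ↪ ι, g ((Fin.castLEEmb h).trans e) =
      (Fintype.card ι - t).descFactorial (n - t) • ∑ f : Fin t ↪ ι, g f := by
  have hsplit := sum_embedding_inl_trans (ι := ι) (β := Fin (n - t)) g
  simp only [Fintype.card_fin] at hsplit
  rw [← hsplit]
  let σ : Fin t ⊕ Fin (n - t) ≃ Fin n := finSumFinEquiv.trans (finCongr (Nat.add_sub_cancel' h))
  exact Fintype.sum_equiv (σ.symm.embeddingCongr (Equiv.refl ι)) _
    (fun e => g (Embedding.inl.trans e)) fun e =>
      congrArg g (DFunLike.ext _ _ fun _ => congrArg e (Fin.ext rfl))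

end EmbeddingSums

lemma ENNReal.two_mul_le_add_sq (x y : ℝ≥0∞) : 2 * x * y ≤ x ^ 2 + y ^ 2 := by
  rcases eq_or_ne x ⊤ with rfl | hx
  · simp
  rcases eq_or_ne y ⊤ with rfl | hy
  · simp
  lift x to NNReal using hx
  lift y to NNReal using hy
  exact_mod_cast _root_.two_mul_le_add_sq x y

lemma ENNReal.sum_sum_erase_mul_le {ι : Type*} (s : Finset ι) (f : ι → ℝ≥0∞) :
    ∑ i ∈ s, ∑ j ∈ s.erase i, f i * f j ≤ (#s - 1 : ℕ) * ∑ i ∈ s, f i ^ 2 := by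
  have hswap : ∑ i ∈ s, ∑ j ∈ s.erase i, f j ^ 2 = ∑ i ∈ s, ∑ j ∈ s.erase i, f i ^ 2 :=
    sum_comm' fun i j => by simp only [mem_erase]; tauto
  have hconst : ∑ i ∈ s, ∑ j ∈ s.erase i, f i ^ 2 = (#s - 1 : ℕ) * ∑ i ∈ s, f i ^ 2 := by
    rw [mul_sum]
    refine sum_congr rfl fun i hi => ?_
    rw [sum_const, card_erase_of_mem hi, nsmul_eq_mul]
  rw [← ENNReal.mul_le_mul_iff_right two_ne_zero ENNReal.ofNat_ne_top]
  calc 2 * ∑ i ∈ s, ∑ j ∈ s.erase i, f i * f j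
      = ∑ i ∈ s, ∑ j ∈ s.erase i, 2 * f i * f j := by simp_rw [mul_sum, mul_assoc]
    _ ≤ ∑ i ∈ s, ∑ j ∈ s.erase i, (f i ^ 2 + f j ^ 2) := by
      gcongr with i _ j _
      exact ENNReal.two_mul_le_add_sq _ _
    _ = 2 * ((#s - 1 : ℕ) * ∑ i ∈ s, f i ^ 2) := by
      simp_rw [sum_add_distrib, hswap, hconst, two_mul]

section Maclaurin

variable {ι : Type*} [Fintype ι] (a : ι → ℝ≥0∞)

/-- `n! e_n(a)`, with `e_n` the `n`-th elementary symmetric polynomial. -/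
noncomputable def embProdSum (n : ℕ) : ℝ≥0∞ := ∑ e : Fin n ↪ ι, ∏ i, a (e i)

noncomputable def embSqProdSum (n : ℕ) : ℝ≥0∞ := ∑ e : Fin (n + 1) ↪ ι, a (e 0) * ∏ i, a (e i)

lemma embProdSum_zero : embProdSum a 0 = 1 := by
  simp [embProdSum]

lemma embProdSum_succ (n : ℕ) :
    embProdSum a (n + 1) = ∑ f : Fin n ↪ ι, ∑ x ∈ (univ.map f)ᶜ, a x * ∏ i, a (f i) := by
  rw [embProdSum, ← sum_embedding_finSucc n fun x f => a x * ∏ i, a (f i)]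
  exact sum_congr rfl fun e _ => Fin.prod_univ_succ _

lemma embProdSum_one : embProdSum a 1 = ∑ x, a x := by
  simp [embProdSum_succ]

lemma embSqProdSum_eq (n : ℕ) :
    embSqProdSum a n = ∑ f : Fin n ↪ ι, ∑ x ∈ (univ.map f)ᶜ, a x ^ 2 * ∏ i, a (f i) := by
  rw [embSqProdSum, ← sum_embedding_finSucc n fun x f => a x ^ 2 * ∏ i, a (f i)]
  refine sum_congr rfl fun e _ => ?_
  rw [Fin.prod_univ_succ, sq, mul_assoc]
  rfl

lemma sum_embedding_apply_mul_prod (n : ℕ) (k : Fin (n + 1)) :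
    ∑ e : Fin (n + 1) ↪ ι, a (e k) * ∏ i, a (e i) = embSqProdSum a n := by
  refine Fintype.sum_equiv ((Equiv.swap 0 k).embeddingCongr (Equiv.refl ι)) _ _ fun e => ?_
  show _ = a (e (Equiv.swap 0 k 0)) * ∏ i, a (e (Equiv.swap 0 k i))
  rw [Equiv.swap_apply_left, Equiv.prod_comp (Equiv.swap 0 k) fun i => a (e i)]

lemma sum_mul_embProdSum_succ (n : ℕ) :
    (∑ x, a x) * embProdSum a (n + 1) = (n + 1) * embSqProdSum a n + embProdSum a (n + 2) := by
  have hsplit (e : Fin (n + 1) ↪ ι) : (∑ x, a x) * ∏ i, a (e i) =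
      ∑ k, a (e k) * ∏ i, a (e i) + ∑ x ∈ (univ.map e)ᶜ, a x * ∏ i, a (e i) := by
    rw [sum_mul, ← sum_add_sum_compl (univ.map e), sum_map]
  rw [embProdSum, mul_sum, sum_congr rfl fun e _ => hsplit e, sum_add_distrib, sum_comm,
    embProdSum_succ]
  simp [sum_embedding_apply_mul_prod]

lemma compl_map_univ_finSucc {n : ℕ} (f : Fin (n + 1) ↪ ι) :
    (univ.map f)ᶜ = (univ.map ((Fin.succEmb n).trans f))ᶜ.erase (f 0) := by
  rw [← compl_insert]
  congr 1
  ext x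
  simp [Fin.exists_fin_succ, eq_comm]

lemma embProdSum_add_two_le (n : ℕ) :
    embProdSum a (n + 2) ≤ (Fintype.card ι - (n + 1) : ℕ) * embSqProdSum a n := by
  have hpairs : embProdSum a (n + 2) = ∑ g : Fin n ↪ ι, (∑ y ∈ (univ.map g)ᶜ,
      ∑ x ∈ (univ.map g)ᶜ.erase y, a y * a x) * ∏ i, a (g i) := by
    calc embProdSum a (n + 2)
        = ∑ f : Fin (n + 1) ↪ ι, ∑ x ∈ (univ.map ((Fin.succEmb n).trans f))ᶜ.erase (f 0),
            a (f 0) * a x * ∏ i, a ((Fin.succEmb n).trans f i) := by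
          rw [embProdSum_succ]
          refine sum_congr rfl fun f _ => ?_
          rw [compl_map_univ_finSucc]
          refine sum_congr rfl fun x _ => ?_
          rw [Fin.prod_univ_succ]
          simp only [Embedding.trans_apply, Fin.coe_succEmb]
          ring
      _ = _ := by
          rw [sum_embedding_finSucc n fun y g => ∑ x ∈ (univ.map g)ᶜ.erase y,
            a y * a x * ∏ i, a (g i)]
          simp_rw [sum_mul]
  rw [hpairs, embSqProdSum_eq, mul_sum]
  refine sum_le_sum fun g _ => ?_
  have hcard : #(univ.map g)ᶜ - 1 = Fintype.card ι - (n + 1) := by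
    rw [card_compl, card_map, card_univ, Fintype.card_fin, Nat.sub_sub]
  calc (∑ y ∈ (univ.map g)ᶜ, ∑ x ∈ (univ.map g)ᶜ.erase y, a y * a x) * ∏ i, a (g i)
      ≤ ((#(univ.map g)ᶜ - 1 : ℕ) * ∑ y ∈ (univ.map g)ᶜ, a y ^ 2) * ∏ i, a (g i) := by
        gcongr
        exact ENNReal.sum_sum_erase_mul_le _ a
    _ = _ := by rw [hcard, mul_assoc, sum_mul]

lemma card_mul_embProdSum_succ_le (n : ℕ) :
    Fintype.card ι * embProdSum a (n + 1) ≤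
      (Fintype.card ι - n : ℕ) * ((∑ x, a x) * embProdSum a n) := by
  rcases n with _ | n
  · simp [embProdSum_one, embProdSum_zero]
  set c : ℝ≥0∞ := ((Fintype.card ι - (n + 1) : ℕ) : ℝ≥0∞)
  calc (Fintype.card ι : ℝ≥0∞) * embProdSum a (n + 2)
      ≤ ((n + 1 : ℕ) + c) * embProdSum a (n + 2) := by
        gcongr
        rw [← Nat.cast_add, Nat.cast_le]
        exact le_add_tsub
    _ ≤ (n + 1 : ℕ) * (c * embSqProdSum a n) + c * embProdSum a (n + 2) := by
        rw [add_mul]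
        gcongr
        exact embProdSum_add_two_le a n
    _ = c * ((∑ x, a x) * embProdSum a (n + 1)) := by
        rw [sum_mul_embProdSum_succ]
        push_cast
        ring

/-- Maclaurin's inequality `e_n(a) / C(b, n) ≤ (e_1(a) / b) ^ n`, with `b = card ι`. -/
lemma pow_card_mul_embProdSum_le (n : ℕ) :
    (Fintype.card ι : ℝ≥0∞) ^ n * embProdSum a n ≤
      (Fintype.card ι).descFactorial n * (∑ x, a x) ^ n := by
  induction n with
  | zero => simp [embProdSum_zero]
  | succ n ih =>
    set b := Fintype.card ι
    calc (b : ℝ≥0∞) ^ (n + 1) * embProdSum a (n + 1) = b ^ n * (b * embProdSum a (n + 1)) := by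
          ring
      _ ≤ b ^ n * ((b - n : ℕ) * ((∑ x, a x) * embProdSum a n)) := by
          gcongr _ * ?_
          exact card_mul_embProdSum_succ_le a n
      _ = (b - n : ℕ) * (∑ x, a x) * (b ^ n * embProdSum a n) := by ring
      _ ≤ (b - n : ℕ) * (∑ x, a x) * (b.descFactorial n * (∑ x, a x) ^ n) := by gcongr
      _ = b.descFactorial (n + 1) * (∑ x, a x) ^ (n + 1) := by
          rw [Nat.descFactorial_succ]
          push_cast
          ring

lemma embProdSum_le_descFactorial_mul_pow {m : ℝ≥0∞} (hι : Fintype.card ι ≠ 0)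
    (ha : ∑ x, a x = Fintype.card ι * m) (n : ℕ) :
    embProdSum a n ≤ (Fintype.card ι).descFactorial n * m ^ n := by
  have h := pow_card_mul_embProdSum_le a n
  rw [ha, mul_pow, mul_left_comm] at h
  exact (ENNReal.mul_le_mul_iff_right (pow_ne_zero _ (by exact_mod_cast hι)) (by simp)).1 h

end Maclaurin

lemma MeasureTheory.Measure.pi_setOf_forall_apply_mem {ι κ X : Type*} [Fintype ι] [Fintype κ]
    [MeasurableSpace X] (ν : ι → Measure X) [∀ i, IsProbabilityMeasure (ν i)] (e : κ ↪ ι)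
    (A : Set X) : Measure.pi ν {x | ∀ k, x (e k) ∈ A} = ∏ k, ν (e k) A := by
  have hpi : {x : ι → X | ∀ k, x (e k) ∈ A} = (univ.map e : Set ι).pi fun _ => A := by
    ext x
    simp
  rw [hpi, Measure.pi_pi_finset, prod_map]

lemma sum_injective_measure_pi_setOf_forall_lt_mem {X : Type*} [MeasurableSpace X] {N b t : ℕ}
    (htN : t ≤ N) (ν : Fin b → Measure X) [∀ j, IsProbabilityMeasure (ν j)] (A : Set X) :
    ∑ k ∈ univ.filter (fun k : Fin N → Fin b => Injective k),
        Measure.pi (fun j => ν (k j)) {x | ∀ j : Fin N, (j : ℕ) < t → x j ∈ A} =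
      (b - t).descFactorial (N - t) * embProdSum (fun j => ν j A) t := by
  have hevent (e : Fin N ↪ Fin b) : Measure.pi (fun j => ν (e j))
      {x | ∀ j : Fin N, (j : ℕ) < t → x j ∈ A} = ∏ i, ν ((Fin.castLEEmb htN).trans e i) A := by
    calc _ = Measure.pi (fun j => ν (e j)) {x | ∀ i, x (Fin.castLEEmb htN i) ∈ A} := by
          congr 1
          ext x
          exact ⟨fun h i => h _ i.2, fun h j hj => h ⟨j, hj⟩⟩
      _ = _ := Measure.pi_setOf_forall_apply_mem _ _ _
  rw [sum_filter_injective_eq_sum_embedding, sum_congr rfl fun e _ => hevent e,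
    sum_embedding_castLEEmb_trans htN fun f => ∏ i, ν (f i) A, Fintype.card_fin, nsmul_eq_mul,
    embProdSum]

lemma sum_cond_eq_mul_of_subset_iUnion {ι Ω : Type*} [Fintype ι] [MeasurableSpace Ω]
    {μ : Measure Ω} {B : ι → Set Ω} {A : Set Ω} {c : ℝ≥0∞} (hBmeas : ∀ j, MeasurableSet (B j))
    (hBdisj : Pairwise (Disjoint on B)) (hA : MeasurableSet A) (hAB : A ⊆ ⋃ j, B j)
    (hBμ : ∀ j, μ (B j) = c⁻¹) :
    ∑ j, μ[A | B j] = c * μ A :=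
  calc ∑ j, μ[A | B j] = ∑ j, c * μ (B j ∩ A) :=
        sum_congr rfl fun j _ => by rw [ProbabilityTheory.cond_apply (hBmeas j), hBμ, inv_inv]
    _ = c * μ (⋃ j, B j ∩ A) := by
        rw [← mul_sum, measure_iUnion (fun i j hij => (hBdisj hij).mono Set.inter_subset_left
          Set.inter_subset_left) fun j => (hBmeas j).inter hA, tsum_fintype]
    _ = c * μ A := by rw [← Set.iUnion_inter, Set.inter_eq_right.2 hAB]

/-- A uniformly random injection of the point indices into the strata encodes a uniform
`N`-subset of strata together with a uniform random permutation of the points. -/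
theorem stmt_4_general {d N β : ℕ} (hN : 0 < N) (hβ : N ≤ β)
    (B : Fin β → Set (Fin d → ℝ)) (hBmeas : ∀ j, MeasurableSet (B j))
    (hBdisj : Pairwise (Function.onFun Disjoint B))
    (hBunion : ⋃ j, B j = Set.univ.pi fun _ => Set.Ico (0 : ℝ) 1)
    (hBvol : ∀ j, volume (B j) = (β : ℝ≥0∞)⁻¹)
    -- the joint law of the N sample points:
    (μ : Measure (Fin N → (Fin d → ℝ)))
    (hμ : μ = ((Finset.univ.filter fun k : Fin N → Fin β =>
        Function.Injective k).card : ℝ≥0∞)⁻¹ •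
      ∑ k ∈ Finset.univ.filter fun k : Fin N → Fin β => Function.Injective k,
        Measure.pi fun j => (β : ℝ≥0∞) • volume.restrict (B (k j)))
    (A : Set (Fin d → ℝ)) (hA : MeasurableSet A)
    (hA' : A ⊆ Set.univ.pi fun _ => Set.Ico (0 : ℝ) 1)
    (t : ℕ) (htN : t ≤ N) :
    μ {x | ∀ j : Fin N, (j : ℕ) < t → x j ∈ A} ≤ volume A ^ t := by
  have hβ0 : β ≠ 0 := (hN.trans_le hβ).ne'
  have hcond (j : Fin β) : (β : ℝ≥0∞) • volume.restrict (B j) = volume[|B j] := by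
    rw [ProbabilityTheory.cond, hBvol, inv_inv]
  have (j : Fin β) : IsProbabilityMeasure volume[|B j] :=
    ProbabilityTheory.cond_isProbabilityMeasure_of_finite (by simp [hBvol]) (by simp [hBvol, hβ0])
  have hsum : ∑ j, volume[A | B j] = β * volume A :=
    sum_cond_eq_mul_of_subset_iUnion hBmeas hBdisj hA (hBunion ▸ hA') hBvol
  have hmaclaurin : embProdSum (volume[A | B ·]) t ≤ β.descFactorial t * volume A ^ t := by
    simpa using embProdSum_le_descFactorial_mul_pow (volume[A | B ·])
      (by rwa [Fintype.card_fin]) (by rwa [Fintype.card_fin]) t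
  have hcard : #(univ.filter fun k : Fin N → Fin β => Injective k) =
      (β - t).descFactorial (N - t) * β.descFactorial t := by
    rw [card_filter_injective, Fintype.card_fin, Fintype.card_fin,
      Nat.descFactorial_mul_descFactorial htN]
  have hcard0 : (β - t).descFactorial (N - t) * β.descFactorial t ≠ 0 := by
    rw [Nat.descFactorial_mul_descFactorial htN]
    exact Nat.descFactorial_eq_zero_iff_lt.not.2 hβ.not_gt
  rw [hμ, Measure.smul_apply, Measure.finsetSum_apply]
  simp_rw [hcond]
  rw [sum_injective_measure_pi_setOf_forall_lt_mem htN (volume[|B ·]), hcard, smul_eq_mul,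
    ENNReal.inv_mul_le_iff (by exact_mod_cast hcard0) (ENNReal.natCast_ne_top _), Nat.cast_mul,
    mul_assoc]
  exact mul_le_mul_right hmaclaurin _

/-- Generalized stratified sampling: choosing uniformly a random injection of the N point
indices into the β strata (equivalently: a uniform N-subset of strata plus a uniform random
permutation of the points) and placing one point uniformly and independently in each chosen
stratum. The theorem states the negative dependence property
P(p_1 ∈ A, ..., p_t ∈ A) ≤ λ(A)^t for every measurable A and every 1 ≤ t ≤ N. -/
theorem stmt_4 {d N β : ℕ} (hN : 0 < N) (hβ : N ≤ β)
    (B : Fin β → Set (Fin d → ℝ)) (hBmeas : ∀ j, MeasurableSet (B j))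
    (hBdisj : Pairwise (Function.onFun Disjoint B))
    (hBunion : ⋃ j, B j = Set.univ.pi fun _ => Set.Ico (0 : ℝ) 1)
    (hBvol : ∀ j, volume (B j) = (β : ℝ≥0∞)⁻¹)
    -- the joint law of the N sample points:
    (μ : Measure (Fin N → (Fin d → ℝ)))
    (hμ : μ = ((Finset.univ.filter fun k : Fin N → Fin β =>
        Function.Injective k).card : ℝ≥0∞)⁻¹ •
      ∑ k ∈ Finset.univ.filter fun k : Fin N → Fin β => Function.Injective k,
        Measure.pi fun j => (β : ℝ≥0∞) • volume.restrict (B (k j)))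
    (A : Set (Fin d → ℝ)) (hA : MeasurableSet A)
    (hA' : A ⊆ Set.univ.pi fun _ => Set.Ico (0 : ℝ) 1)
    (t : ℕ) (ht : 1 ≤ t) (htN : t ≤ N) :
    μ {x | ∀ j : Fin N, (j : ℕ) < t → x j ∈ A} ≤ volume A ^ t :=
  stmt_4_general hN hβ B hBmeas hBdisj hBunion hBvol μ hμ A hA hA' t htN
end

section
/- Let A ⊆ [0,1)^{d'} and B ⊆ [0,1)^{d''} be measurable, (x_1,...,x_N) random points in [0,1)^{d'} and (y_1,...,y_N) random points in [0,1)^{d''}, mutually independent as families. If the binary random variables 1_A(x_i), i=1,...,N, are upper negatively α-dependent and 1_B(y_i), i=1,...,N, are upper negatively β-dependent, then the binary random variables 1_{A×B}(x_i,y_i), i=1,...,N, are upper negatively αβ-dependent. -/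
open MeasureTheory ProbabilityTheory
open scoped ENNReal

/- The event `{x_j ∈ A, y_j ∈ B for all j ∈ u}` is the intersection of an event determined by
the family `x` with one determined by the family `y`, so independence of the families factorises
its probability; bounding each factor by upper negative dependence and factorising each
`P(x_j ∈ A, y_j ∈ B)` in the same way gives the bound with constant `αβ`. -/

namespace ProbabilityTheory

variable {Ω ι : Type*} {mΩ : MeasurableSpace Ω} {μ : Measure Ω}

def UpperNegDep (μ : Measure Ω) (E : ι → Set Ω) (γ : ℝ≥0∞) : Prop :=
  ∀ u : Finset ι, μ (⋂ j ∈ u, E j) ≤ γ * ∏ j ∈ u, μ (E j)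

lemma Indep.measure_biInter_inter_biInter {m₁ m₂ : MeasurableSpace Ω} (h : Indep m₁ m₂ μ)
    {E F : ι → Set Ω} (hE : ∀ j, MeasurableSet[m₁] (E j)) (hF : ∀ j, MeasurableSet[m₂] (F j))
    (u : Finset ι) :
    μ ((⋂ j ∈ u, E j) ∩ ⋂ j ∈ u, F j) = μ (⋂ j ∈ u, E j) * μ (⋂ j ∈ u, F j) :=
  (Indep_iff _ _ _).1 h _ _ (.biInter u.countable_toSet fun j _ => hE j)
    (.biInter u.countable_toSet fun j _ => hF j)

theorem UpperNegDep.inter_of_indep {m₁ m₂ : MeasurableSpace Ω} {E F : ι → Set Ω}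
    {γ δ : ℝ≥0∞} (hE : UpperNegDep μ E γ) (hF : UpperNegDep μ F δ) (h : Indep m₁ m₂ μ)
    (hEm : ∀ j, MeasurableSet[m₁] (E j)) (hFm : ∀ j, MeasurableSet[m₂] (F j)) :
    UpperNegDep μ (fun j => E j ∩ F j) (γ * δ) := by
  intro u
  have hsplit : ⋂ j ∈ u, (E j ∩ F j) = (⋂ j ∈ u, E j) ∩ ⋂ j ∈ u, F j := by
    simp only [Set.iInter_inter_distrib]
  have hsingle (j : ι) : μ (E j ∩ F j) = μ (E j) * μ (F j) :=
    (Indep_iff _ _ _).1 h _ _ (hEm j) (hFm j)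
  calc μ (⋂ j ∈ u, (E j ∩ F j))
      = μ (⋂ j ∈ u, E j) * μ (⋂ j ∈ u, F j) := by
        rw [hsplit, h.measure_biInter_inter_biInter hEm hFm]
    _ ≤ (γ * ∏ j ∈ u, μ (E j)) * (δ * ∏ j ∈ u, μ (F j)) := mul_le_mul' (hE u) (hF u)
    _ = γ * δ * ∏ j ∈ u, μ (E j ∩ F j) := by
        rw [Finset.prod_congr rfl fun j _ => hsingle j, Finset.prod_mul_distrib]
        ring

end ProbabilityTheory

theorem stmt_5_general {Ω : Type*} [MeasureSpace Ω]
    {d' d'' N : ℕ} (A : Set (Fin d' → ℝ)) (B : Set (Fin d'' → ℝ))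
    (hA : MeasurableSet A) (hB : MeasurableSet B)
    (x : Fin N → Ω → (Fin d' → ℝ)) (y : Fin N → Ω → (Fin d'' → ℝ))
    (α β : ℝ≥0∞)
    (hindep : IndepFun (fun ω i => x i ω) (fun ω i => y i ω) ℙ)
    (hx : ∀ u : Finset (Fin N),
      ℙ (⋂ j ∈ u, {ω | x j ω ∈ A}) ≤ α * ∏ j ∈ u, ℙ {ω | x j ω ∈ A})
    (hy : ∀ u : Finset (Fin N),
      ℙ (⋂ j ∈ u, {ω | y j ω ∈ B}) ≤ β * ∏ j ∈ u, ℙ {ω | y j ω ∈ B}) :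
    ∀ u : Finset (Fin N),
      ℙ (⋂ j ∈ u, {ω | x j ω ∈ A ∧ y j ω ∈ B}) ≤
        α * β * ∏ j ∈ u, ℙ {ω | x j ω ∈ A ∧ y j ω ∈ B} :=
  -- `{ω | p ω ∧ q ω}` is definitionally `{ω | p ω} ∩ {ω | q ω}`.
  UpperNegDep.inter_of_indep (E := fun j => {ω | x j ω ∈ A}) (F := fun j => {ω | y j ω ∈ B})
    hx hy ((IndepFun_iff_Indep _ _ _).1 hindep)
    (fun j => ⟨_, measurable_pi_apply j hA, rfl⟩) (fun j => ⟨_, measurable_pi_apply j hB, rfl⟩)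

/-- Concatenating two mutually independent families whose indicators are upper negatively
α- resp. β-dependent yields indicators that are upper negatively αβ-dependent. -/
theorem stmt_5 {Ω : Type*} [MeasureSpace Ω] [IsProbabilityMeasure (ℙ : Measure Ω)]
    {d' d'' N : ℕ} (A : Set (Fin d' → ℝ)) (B : Set (Fin d'' → ℝ))
    (hA : MeasurableSet A) (hB : MeasurableSet B)
    (hA' : A ⊆ Set.univ.pi fun _ => Set.Ico (0 : ℝ) 1)
    (hB' : B ⊆ Set.univ.pi fun _ => Set.Ico (0 : ℝ) 1)
    (x : Fin N → Ω → (Fin d' → ℝ)) (y : Fin N → Ω → (Fin d'' → ℝ))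
    (hxm : ∀ i, Measurable (x i)) (hym : ∀ i, Measurable (y i))
    (α β : ℝ≥0∞) (hα : 1 ≤ α) (hβ : 1 ≤ β)
    (hindep : IndepFun (fun ω i => x i ω) (fun ω i => y i ω) ℙ)
    (hx : ∀ u : Finset (Fin N),
      ℙ (⋂ j ∈ u, {ω | x j ω ∈ A}) ≤ α * ∏ j ∈ u, ℙ {ω | x j ω ∈ A})
    (hy : ∀ u : Finset (Fin N),
      ℙ (⋂ j ∈ u, {ω | y j ω ∈ B}) ≤ β * ∏ j ∈ u, ℙ {ω | y j ω ∈ B}) :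
    ∀ u : Finset (Fin N),
      ℙ (⋂ j ∈ u, {ω | x j ω ∈ A ∧ y j ω ∈ B}) ≤
        α * β * ∏ j ∈ u, ℙ {ω | x j ω ∈ A ∧ y j ω ∈ B} :=
  stmt_5_general A B hA hB x y α β hindep hx hy
end

section
/- Let A ⊆ [0,1)^{d'} and B ⊆ [0,1)^{d''} be measurable. Let (x_1,...,x_N) be a sampling scheme in [0,1)^{d'} such that the indicators 1_A(x_i) are lower negatively α-dependent, and let (y_1,...,y_N) be i.i.d. uniform points on [0,1)^{d''}, independent of the x_i. Then the indicators 1_{A×B}(x_i,y_i), i=1,...,N, are lower negatively α-dependent; that is, for every J ⊆ [N] of size t, P(∩_{j∈J}{(x_j,y_j) ∉ A×B}) ≤ α · P((x_1,y_1) ∉ A×B)^t. -/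
open MeasureTheory ProbabilityTheory
open scoped ENNReal

/-!
Split the event `⋂ j ∈ u, {(x j, y j) ∉ A ×ˢ B}` according to the set `v ⊆ u` of indices with
`y j ∈ B`; on the piece indexed by `v`, `x j ∉ A` for `j ∈ v`. Independence of the `x`'s from the
`y`'s, and among the `y`'s, factors the probability of each piece; negative dependence of the `x`'s
bounds its `x`-factor; and summing over `v` reassembles, by the expansion of
`∏ j ∈ u, (P(x j ∉ A) P(y j ∈ B) + P(y j ∉ B))`, into `α * ∏ j ∈ u, P((x j, y j) ∉ A ×ˢ B)`.
-/

namespace ProbabilityTheory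

variable {Ω ι α β : Type*}

lemma biInter_union_subset_biUnion_powerset [DecidableEq ι] (u : Finset ι) (E F : ι → Set Ω) :
    ⋂ j ∈ u, (E j ∪ F j) ⊆
      ⋃ v ∈ u.powerset, (⋂ j ∈ v, E j) ∩ ⋂ j ∈ u, if j ∈ v then (F j)ᶜ else F j := by
  classical
  intro ω hω
  simp only [Set.mem_iInter] at hω
  refine Set.mem_biUnion (Finset.mem_powerset.2 (Finset.filter_subset (fun j => ω ∉ F j) u)) ?_
  simp only [Set.mem_inter_iff, Set.mem_iInter, Finset.mem_filter]
  refine ⟨fun j hj => (hω j hj.1).resolve_right hj.2, fun j hj => ?_⟩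
  split_ifs with h
  · exact h.2
  · exact not_not.1 fun hF => h ⟨hj, hF⟩

variable [MeasurableSpace Ω] [MeasurableSpace α] [MeasurableSpace β]

/-- Lower `γ`-negative dependence of binary variables `T j`, phrased through the events
`E j = {T j = 0}`. -/
def LowerNegDependent (μ : Measure Ω) (γ : ℝ≥0∞) (E : ι → Set Ω) : Prop :=
  ∀ u : Finset ι, μ (⋂ j ∈ u, E j) ≤ γ * ∏ j ∈ u, μ (E j)

lemma IndepFun.measure_preimage_union {μ : Measure Ω} {X : Ω → α} {Y : Ω → β}
    (hXY : IndepFun X Y μ) (hY : Measurable Y) {S : Set α} {T : Set β}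
    (hS : MeasurableSet S) (hT : MeasurableSet T) :
    μ (X ⁻¹' S ∪ Y ⁻¹' T) = μ (X ⁻¹' S) * μ (Y ⁻¹' Tᶜ) + μ (Y ⁻¹' T) := by
  rw [← Set.sdiff_union_self, measure_union Set.disjoint_sdiff_left (hY hT), Set.sdiff_eq,
    ← Set.preimage_compl, hXY.measure_inter_preimage_eq_mul _ _ hS hT.compl]

lemma IndepFun.measure_biInter_inter_biInter {μ : Measure Ω} {X : ι → Ω → α} {Y : ι → Ω → β}
    (hXY : IndepFun (fun ω j => X j ω) (fun ω j => Y j ω) μ) {S : ι → Set α}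
    {T : ι → Set β} (hS : ∀ j, MeasurableSet (S j)) (hT : ∀ j, MeasurableSet (T j))
    (v w : Finset ι) :
    μ ((⋂ j ∈ v, X j ⁻¹' S j) ∩ ⋂ j ∈ w, Y j ⁻¹' T j) =
      μ (⋂ j ∈ v, X j ⁻¹' S j) * μ (⋂ j ∈ w, Y j ⁻¹' T j) := by
  simpa only [Set.preimage_iInter₂, Set.preimage_preimage] using
    hXY.measure_inter_preimage_eq_mul _ _
      (v.measurableSet_biInter fun j _ => measurable_pi_apply j (hS j))
      (w.measurableSet_biInter fun j _ => measurable_pi_apply j (hT j))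

theorem LowerNegDependent.union_preimage {μ : Measure Ω} {γ : ℝ≥0∞} {X : ι → Ω → α}
    {Y : ι → Ω → β} {S : ι → Set α} {T : ι → Set β} (hS : ∀ j, MeasurableSet (S j))
    (hT : ∀ j, MeasurableSet (T j)) (hY : ∀ j, Measurable (Y j))
    (hXY : IndepFun (fun ω j => X j ω) (fun ω j => Y j ω) μ) (hYi : iIndepFun Y μ)
    (hX : LowerNegDependent μ γ fun j => X j ⁻¹' S j) :
    LowerNegDependent μ γ fun j => X j ⁻¹' S j ∪ Y j ⁻¹' T j := by
  classical
  intro u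
  have piece (v : Finset ι) (hv : v ⊆ u) :
      μ ((⋂ j ∈ v, X j ⁻¹' S j) ∩ ⋂ j ∈ u, if j ∈ v then (Y j ⁻¹' T j)ᶜ else Y j ⁻¹' T j) ≤
        γ * ((∏ j ∈ v, μ (X j ⁻¹' S j) * μ (Y j ⁻¹' (T j)ᶜ)) * ∏ j ∈ u \ v, μ (Y j ⁻¹' T j)) := by
    have hR : ∀ j, MeasurableSet (if j ∈ v then (T j)ᶜ else T j) := fun j => by
      split_ifs
      exacts [(hT j).compl, hT j]
    have hpre : ∀ j, (if j ∈ v then (Y j ⁻¹' T j)ᶜ else Y j ⁻¹' T j) =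
        Y j ⁻¹' if j ∈ v then (T j)ᶜ else T j := fun j => by split_ifs <;> rfl
    simp_rw [hpre, hXY.measure_biInter_inter_biInter hS hR,
      hYi.measure_inter_preimage_eq_mul u fun j _ => hR j, ← Finset.prod_sdiff hv]
    have hin : ∏ j ∈ v, μ (Y j ⁻¹' if j ∈ v then (T j)ᶜ else T j) = ∏ j ∈ v, μ (Y j ⁻¹' (T j)ᶜ) :=
      Finset.prod_congr rfl fun j hj => by rw [if_pos hj]
    have hout : ∏ j ∈ u \ v, μ (Y j ⁻¹' if j ∈ v then (T j)ᶜ else T j) =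
        ∏ j ∈ u \ v, μ (Y j ⁻¹' T j) :=
      Finset.prod_congr rfl fun j hj => by rw [if_neg (Finset.mem_sdiff.1 hj).2]
    calc _ ≤ γ * (∏ j ∈ v, μ (X j ⁻¹' S j)) *
          ((∏ j ∈ v, μ (Y j ⁻¹' (T j)ᶜ)) * ∏ j ∈ u \ v, μ (Y j ⁻¹' T j)) := by
          rw [hin, hout, mul_comm (∏ j ∈ u \ v, _)]
          exact mul_le_mul_left (hX v) _
      _ = _ := by rw [Finset.prod_mul_distrib]; ring
  calc μ (⋂ j ∈ u, (X j ⁻¹' S j ∪ Y j ⁻¹' T j))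
      ≤ ∑ v ∈ u.powerset,
          μ ((⋂ j ∈ v, X j ⁻¹' S j) ∩ ⋂ j ∈ u, if j ∈ v then (Y j ⁻¹' T j)ᶜ else Y j ⁻¹' T j) :=
        (measure_mono (biInter_union_subset_biUnion_powerset u _ _)).trans
          (measure_biUnion_finset_le _ _)
    _ ≤ ∑ v ∈ u.powerset,
          γ * ((∏ j ∈ v, μ (X j ⁻¹' S j) * μ (Y j ⁻¹' (T j)ᶜ)) * ∏ j ∈ u \ v, μ (Y j ⁻¹' T j)) :=
        Finset.sum_le_sum fun v hv => piece v (Finset.mem_powerset.1 hv)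
    _ = γ * ∏ j ∈ u, μ (X j ⁻¹' S j ∪ Y j ⁻¹' T j) := by
        rw [← Finset.mul_sum, ← Finset.prod_add]
        refine congrArg _ (Finset.prod_congr rfl fun j _ => ?_)
        have hXYj : IndepFun (X j) (Y j) μ :=
          hXY.comp (measurable_pi_apply j) (measurable_pi_apply j)
        exact (hXYj.measure_preimage_union (hY j) (hS j) (hT j)).symm

end ProbabilityTheory

theorem stmt_6_general {Ω : Type*} [MeasureSpace Ω]
    {d' d'' N : ℕ} (hN : 0 < N) (A : Set (Fin d' → ℝ)) (B : Set (Fin d'' → ℝ))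
    (hA : MeasurableSet A) (hB : MeasurableSet B)
    (x : Fin N → Ω → (Fin d' → ℝ)) (y : Fin N → Ω → (Fin d'' → ℝ))
    (hxm : ∀ i, Measurable (x i)) (hym : ∀ i, Measurable (y i))
    -- x is a sampling scheme: uniform marginals and exchangeable
    (hxu : ∀ i, Measure.map (x i) ℙ = Measure.pi fun _ => volume.restrict (Set.Ico (0 : ℝ) 1))
    -- y are i.i.d. uniform on [0,1)^{d''}
    (hyu : ∀ i, Measure.map (y i) ℙ = Measure.pi fun _ => volume.restrict (Set.Ico (0 : ℝ) 1))
    (hyindep : iIndepFun y ℙ)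
    -- the y family is independent of the x family
    (hindep : IndepFun (fun ω i => x i ω) (fun ω i => y i ω) ℙ)
    (α : ℝ≥0∞)
    (hx : ∀ u : Finset (Fin N),
      ℙ (⋂ j ∈ u, {ω | x j ω ∉ A}) ≤ α * ∏ j ∈ u, ℙ {ω | x j ω ∉ A}) :
    ∀ u : Finset (Fin N),
      ℙ (⋂ j ∈ u, {ω | ¬(x j ω ∈ A ∧ y j ω ∈ B)}) ≤
        α * ℙ {ω | ¬(x ⟨0, hN⟩ ω ∈ A ∧ y ⟨0, hN⟩ ω ∈ B)} ^ u.card := by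
  intro u
  have hunion (j : Fin N) : {ω | ¬(x j ω ∈ A ∧ y j ω ∈ B)} = x j ⁻¹' Aᶜ ∪ y j ⁻¹' Bᶜ :=
    Set.ext fun _ => not_and_or
  have hmarginal (j : Fin N) :
      ℙ (x j ⁻¹' Aᶜ ∪ y j ⁻¹' Bᶜ) = ℙ (x ⟨0, hN⟩ ⁻¹' Aᶜ ∪ y ⟨0, hN⟩ ⁻¹' Bᶜ) := by
    have hxy (i : Fin N) : IndepFun (x i) (y i) ℙ :=
      hindep.comp (measurable_pi_apply i) (measurable_pi_apply i)
    simp only [(hxy _).measure_preimage_union (hym _) hA.compl hB.compl,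
      ← Measure.map_apply (hxm _) hA.compl, ← Measure.map_apply (hym _) hB.compl.compl,
      ← Measure.map_apply (hym _) hB.compl, hxu, hyu]
  have hdep := LowerNegDependent.union_preimage (fun _ => hA.compl) (fun _ => hB.compl) hym
    hindep hyindep hx u
  simp only [hunion]
  rwa [Finset.prod_congr rfl fun j _ => hmarginal j, Finset.prod_const] at hdep

/-- Padding a sampling scheme with lower negatively α-dependent indicators by i.i.d. uniform
Monte Carlo points preserves lower negative α-dependence of the indicators. -/
theorem stmt_6 {Ω : Type*} [MeasureSpace Ω] [IsProbabilityMeasure (ℙ : Measure Ω)]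
    {d' d'' N : ℕ} (hN : 0 < N) (A : Set (Fin d' → ℝ)) (B : Set (Fin d'' → ℝ))
    (hA : MeasurableSet A) (hB : MeasurableSet B)
    (x : Fin N → Ω → (Fin d' → ℝ)) (y : Fin N → Ω → (Fin d'' → ℝ))
    (hxm : ∀ i, Measurable (x i)) (hym : ∀ i, Measurable (y i))
    -- x is a sampling scheme: uniform marginals and exchangeable
    (hxu : ∀ i, Measure.map (x i) ℙ = Measure.pi fun _ => volume.restrict (Set.Ico (0 : ℝ) 1))
    (hxex : ∀ π : Equiv.Perm (Fin N),
      Measure.map (fun ω (j : Fin N) => x (π j) ω) ℙ = Measure.map (fun ω j => x j ω) ℙ)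
    -- y are i.i.d. uniform on [0,1)^{d''}
    (hyu : ∀ i, Measure.map (y i) ℙ = Measure.pi fun _ => volume.restrict (Set.Ico (0 : ℝ) 1))
    (hyindep : iIndepFun y ℙ)
    -- the y family is independent of the x family
    (hindep : IndepFun (fun ω i => x i ω) (fun ω i => y i ω) ℙ)
    (α : ℝ≥0∞) (hα : 1 ≤ α)
    (hx : ∀ u : Finset (Fin N),
      ℙ (⋂ j ∈ u, {ω | x j ω ∉ A}) ≤ α * ∏ j ∈ u, ℙ {ω | x j ω ∉ A}) :
    ∀ u : Finset (Fin N),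
      ℙ (⋂ j ∈ u, {ω | ¬(x j ω ∈ A ∧ y j ω ∈ B)}) ≤
        α * ℙ {ω | ¬(x ⟨0, hN⟩ ω ∈ A ∧ y ⟨0, hN⟩ ω ∈ B)} ^ u.card :=
  stmt_6_general hN A B hA hB x y hxm hym hxu hyu hyindep hindep α hx
end

section
/- Let A ⊆ [0,1)^{d'} and B ⊆ [0,1)^{d''} be measurable, (x_1,...,x_N) a sampling scheme in [0,1)^{d'} with 1_A(x_i) lower negatively α-dependent, and (y_1,...,y_N) a sampling scheme in [0,1)^{d''} with 1_B(y_i) lower negatively β-dependent; assume the two families are mutually independent. Then the indicators 1_{A×B}(x_i,y_i), i=1,...,N, are lower negatively αβ-dependent. -/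
open MeasureTheory ProbabilityTheory
open scoped ENNReal

/-- Concatenating two mutually independent sampling schemes whose indicators are lower
negatively α- resp. β-dependent yields indicators that are lower negatively αβ-dependent. -/
theorem stmt_7 {Ω : Type*} [MeasureSpace Ω] [IsProbabilityMeasure (ℙ : Measure Ω)]
    {d' d'' N : ℕ} (A : Set (Fin d' → ℝ)) (B : Set (Fin d'' → ℝ))
    (hA : MeasurableSet A) (hB : MeasurableSet B)
    (x : Fin N → Ω → (Fin d' → ℝ)) (y : Fin N → Ω → (Fin d'' → ℝ))
    (hxm : ∀ i, Measurable (x i)) (hym : ∀ i, Measurable (y i))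
    -- each point is uniformly distributed
    (hxu : ∀ i, Measure.map (x i) ℙ = Measure.pi fun _ => volume.restrict (Set.Ico (0 : ℝ) 1))
    (hyu : ∀ i, Measure.map (y i) ℙ = Measure.pi fun _ => volume.restrict (Set.Ico (0 : ℝ) 1))
    -- exchangeability of each sampling scheme
    (hxex : ∀ π : Equiv.Perm (Fin N),
      Measure.map (fun ω (j : Fin N) => x (π j) ω) ℙ = Measure.map (fun ω j => x j ω) ℙ)
    (hyex : ∀ π : Equiv.Perm (Fin N),
      Measure.map (fun ω (j : Fin N) => y (π j) ω) ℙ = Measure.map (fun ω j => y j ω) ℙ)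
    (α β : ℝ≥0∞) (hα : 1 ≤ α) (hβ : 1 ≤ β)
    (hindep : IndepFun (fun ω i => x i ω) (fun ω i => y i ω) ℙ)
    (hx : ∀ u : Finset (Fin N),
      ℙ (⋂ j ∈ u, {ω | x j ω ∉ A}) ≤ α * ∏ j ∈ u, ℙ {ω | x j ω ∉ A})
    (hy : ∀ u : Finset (Fin N),
      ℙ (⋂ j ∈ u, {ω | y j ω ∉ B}) ≤ β * ∏ j ∈ u, ℙ {ω | y j ω ∉ B}) :
    ∀ u : Finset (Fin N),
      ℙ (⋂ j ∈ u, {ω | ¬(x j ω ∈ A ∧ y j ω ∈ B)}) ≤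
        α * β * ∏ j ∈ u, ℙ {ω | ¬(x j ω ∈ A ∧ y j ω ∈ B)} := by
  classical
  intro u
  rcases u.eq_empty_or_nonempty with rfl | ⟨j0, hj0⟩
  · simp only [Finset.notMem_empty, Set.iInter_of_empty, Set.iInter_univ, Finset.prod_empty,
      measure_univ, mul_one]
    calc (1 : ℝ≥0∞) = 1 * 1 := (one_mul 1).symm
    _ ≤ α * β := mul_le_mul' hα hβ
  -- Uniform distribution implies that all the marginal probabilities agree.
  set p := ℙ {ω | x j0 ω ∉ A} with hpdef
  set q := ℙ {ω | y j0 ω ∉ B} with hqdef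
  have hpj : ∀ j, ℙ {ω | x j ω ∉ A} = p := by
    have h1 : ∀ j : Fin N, ℙ {ω | x j ω ∉ A} =
        (Measure.pi fun _ : Fin d' => volume.restrict (Set.Ico (0:ℝ) 1)) Aᶜ := by
      intro j
      have : {ω | x j ω ∉ A} = (x j) ⁻¹' Aᶜ := rfl
      rw [this, ← Measure.map_apply (hxm j) hA.compl, hxu j]
    intro j; rw [h1 j, hpdef, h1 j0]
  have hqj : ∀ j, ℙ {ω | y j ω ∉ B} = q := by
    have h1 : ∀ j : Fin N, ℙ {ω | y j ω ∉ B} =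
        (Measure.pi fun _ : Fin d'' => volume.restrict (Set.Ico (0:ℝ) 1)) Bᶜ := by
      intro j
      have : {ω | y j ω ∉ B} = (y j) ⁻¹' Bᶜ := rfl
      rw [this, ← Measure.map_apply (hym j) hB.compl, hyu j]
    intro j; rw [h1 j, hqdef, h1 j0]
  have hp1 : p ≤ 1 := prob_le_one
  have hone : (1 - p) + p = 1 := tsub_add_cancel_of_le hp1
  -- The events
  set E : Finset (Fin N) → Set Ω := fun v => ⋂ j ∈ v, {ω | x j ω ∉ A} with hE
  set G : Finset (Fin N) → Set Ω := fun v => {ω | ∀ j ∈ u, (y j ω ∈ B ↔ j ∈ v)} with hG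
  have hSE : ∀ v : Finset (Fin N),
      MeasurableSet (⋂ j ∈ v, {f : Fin N → Fin d' → ℝ | f j ∉ A}) := fun v =>
    MeasurableSet.biInter v.countable_toSet fun j _ =>
      show MeasurableSet ((fun f : Fin N → Fin d' → ℝ => f j) ⁻¹' Aᶜ) from
        measurable_pi_apply j hA.compl
  have hSG : ∀ v : Finset (Fin N),
      MeasurableSet {g : Fin N → Fin d'' → ℝ | ∀ j ∈ u, (g j ∈ B ↔ j ∈ v)} := by
    intro v
    have h2 : {g : Fin N → Fin d'' → ℝ | ∀ j ∈ u, (g j ∈ B ↔ j ∈ v)}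
        = ⋂ j ∈ u, {g | g j ∈ B ↔ j ∈ v} := by ext g; simp
    rw [h2]
    refine MeasurableSet.biInter u.countable_toSet fun j _ => ?_
    by_cases hjv : j ∈ v
    · simp only [hjv, iff_true]
      exact show MeasurableSet ((fun g : Fin N → Fin d'' → ℝ => g j) ⁻¹' B) from
        measurable_pi_apply j hB
    · simp only [hjv, iff_false]
      exact show MeasurableSet ((fun g : Fin N → Fin d'' → ℝ => g j) ⁻¹' Bᶜ) from
        measurable_pi_apply j hB.compl
  have hmeasG : ∀ v, MeasurableSet (G v) := by
    intro v
    have : G v = (fun ω (i : Fin N) => y i ω) ⁻¹' {g | ∀ j ∈ u, (g j ∈ B ↔ j ∈ v)} := rfl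
    rw [this]
    exact (measurable_pi_lambda _ fun i => hym i) (hSG v)
  -- independence of the E- and G-events
  have hstep2 : ∀ v : Finset (Fin N), ℙ (E v ∩ G v) = ℙ (E v) * ℙ (G v) := by
    intro v
    have hEv : E v = (fun ω (i : Fin N) => x i ω) ⁻¹' (⋂ j ∈ v, {f | f j ∉ A}) := by
      ext ω; simp [hE]
    have hGv : G v = (fun ω (i : Fin N) => y i ω) ⁻¹' {g | ∀ j ∈ u, (g j ∈ B ↔ j ∈ v)} := rfl
    rw [hEv, hGv]
    exact hindep.measure_inter_preimage_eq_mul _ _ (hSE v) (hSG v)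
  -- covering the target event
  have hcover : (⋂ j ∈ u, {ω | ¬(x j ω ∈ A ∧ y j ω ∈ B)}) ⊆ ⋃ v ∈ u.powerset, (E v ∩ G v) := by
    intro ω hω
    simp only [Set.mem_iInter, Set.mem_setOf_eq] at hω
    refine Set.mem_iUnion₂.2 ⟨u.filter (fun j => y j ω ∈ B),
      Finset.mem_powerset.2 (Finset.filter_subset _ u), ?_, ?_⟩
    · simp only [hE, Set.mem_iInter, Set.mem_setOf_eq, Finset.mem_filter]
      rintro j ⟨hju, hjB⟩
      intro hjA
      exact hω j hju ⟨hjA, hjB⟩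
    · simp only [hG, Set.mem_setOf_eq, Finset.mem_filter]
      intro j hju
      constructor
      · intro hb; exact ⟨hju, hb⟩
      · rintro ⟨_, hb⟩; exact hb
  -- bound on the E-events
  have hE_le : ∀ v : Finset (Fin N), ℙ (E v) ≤ α * p ^ v.card := by
    intro v
    calc ℙ (E v) ≤ α * ∏ j ∈ v, ℙ {ω | x j ω ∉ A} := hx v
    _ = α * p ^ v.card := by
        rw [Finset.prod_congr rfl fun j _ => hpj j, Finset.prod_const]
  -- the combinatorial redistribution of the product p^|v|
  have hpow : ∀ v ∈ u.powerset, (p : ℝ≥0∞) ^ v.card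
      = ∑ w ∈ u.powerset, (∏ j ∈ w, (if j ∈ v then 0 else (1 - p))) * p ^ (u \ w).card := by
    intro v hv
    have key := Finset.prod_add (fun j => if j ∈ v then (0 : ℝ≥0∞) else (1 - p)) (fun _ => p) u
    have hL : ∏ j ∈ u, ((if j ∈ v then (0 : ℝ≥0∞) else (1 - p)) + p) = p ^ v.card := by
      have : ∀ j ∈ u, ((if j ∈ v then (0 : ℝ≥0∞) else (1 - p)) + p)
          = (if j ∈ v then p else 1) := by
        intro j _
        by_cases hjv : j ∈ v
        · simp [hjv]
        · simp [hjv, hone]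
      rw [Finset.prod_congr rfl this, Finset.prod_ite_mem,
        Finset.inter_eq_right.2 (Finset.mem_powerset.1 hv), Finset.prod_const]
    rw [← hL, key]
    refine Finset.sum_congr rfl fun w _ => ?_
    rw [Finset.prod_const]
  -- the G-events with prescribed trace disjoint from w are disjoint and contained in ⋂_{j∈w} F_j
  have hGdisj : ∀ v v' : Finset (Fin N), v ∈ u.powerset → v' ∈ u.powerset → v ≠ v' →
      Disjoint (G v) (G v') := by
    intro v v' hv hv' hne
    rw [Set.disjoint_left]
    intro ω h1 h2
    simp only [hG, Set.mem_setOf_eq] at h1 h2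
    apply hne
    ext j
    constructor
    · intro hjv
      have hju := Finset.mem_powerset.1 hv hjv
      exact (h2 j hju).1 ((h1 j hju).2 hjv)
    · intro hjv'
      have hju := Finset.mem_powerset.1 hv' hjv'
      exact (h1 j hju).1 ((h2 j hju).2 hjv')
  have hinner : ∀ w ∈ u.powerset,
      ∑ v ∈ u.powerset.filter (fun v => Disjoint w v), ℙ (G v) ≤ β * q ^ w.card := by
    intro w hw
    have hwu : w ⊆ u := Finset.mem_powerset.1 hw
    have hdisj : Set.PairwiseDisjoint ↑(u.powerset.filter (fun v => Disjoint w v)) G := by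
      intro v hv v' hv' hne
      simp only [Finset.coe_filter, Set.mem_setOf_eq] at hv hv'
      exact hGdisj v v' hv.1 hv'.1 hne
    have hsum_eq := measure_biUnion_finset (μ := ℙ) hdisj
      (fun v _ => hmeasG v)
    rw [← hsum_eq]
    have hsub : (⋃ v ∈ u.powerset.filter (fun v => Disjoint w v), G v)
        ⊆ ⋂ j ∈ w, {ω | y j ω ∉ B} := by
      intro ω hω
      simp only [Set.mem_iUnion] at hω
      obtain ⟨v, hv, hωv⟩ := hω
      simp only [Finset.mem_filter, Finset.mem_powerset] at hv
      simp only [hG, Set.mem_setOf_eq] at hωv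
      simp only [Set.mem_iInter, Set.mem_setOf_eq]
      intro j hjw hjB
      have hjv : j ∈ v := (hωv j (hwu hjw)).1 hjB
      exact (Finset.disjoint_left.1 hv.2 hjw) hjv
    calc ℙ (⋃ v ∈ u.powerset.filter (fun v => Disjoint w v), G v)
        ≤ ℙ (⋂ j ∈ w, {ω | y j ω ∉ B}) := measure_mono hsub
      _ ≤ β * ∏ j ∈ w, ℙ {ω | y j ω ∉ B} := hy w
      _ = β * q ^ w.card := by
          rw [Finset.prod_congr rfl fun j _ => hqj j, Finset.prod_const]
  -- the main combinatorial bound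
  have hsum : ∑ v ∈ u.powerset, p ^ v.card * ℙ (G v)
      ≤ β * ∏ _j ∈ u, ((1 - p) * q + p) := by
    have hprodite : ∀ w v : Finset (Fin N),
        (∏ j ∈ w, if j ∈ v then (0 : ℝ≥0∞) else (1 - p))
          = if Disjoint w v then (1 - p) ^ w.card else 0 := by
      intro w v
      by_cases h : Disjoint w v
      · rw [if_pos h, Finset.prod_congr rfl
          (fun j hj => if_neg (Finset.disjoint_left.1 h hj)), Finset.prod_const]
      · rw [if_neg h]
        obtain ⟨j, hjw, hjv⟩ := Finset.not_disjoint_iff.1 h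
        exact Finset.prod_eq_zero hjw (if_pos hjv)
    calc ∑ v ∈ u.powerset, p ^ v.card * ℙ (G v)
        = ∑ v ∈ u.powerset, ∑ w ∈ u.powerset,
            ((∏ j ∈ w, if j ∈ v then (0 : ℝ≥0∞) else (1 - p)) * p ^ (u \ w).card) * ℙ (G v) := by
          refine Finset.sum_congr rfl fun v hv => ?_
          rw [hpow v hv, Finset.sum_mul]
      _ = ∑ w ∈ u.powerset, p ^ (u \ w).card *
            ∑ v ∈ u.powerset, (∏ j ∈ w, if j ∈ v then (0 : ℝ≥0∞) else (1 - p)) * ℙ (G v) := by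
          rw [Finset.sum_comm]
          refine Finset.sum_congr rfl fun w _ => ?_
          rw [Finset.mul_sum]
          refine Finset.sum_congr rfl fun v _ => ?_
          ring
      _ = ∑ w ∈ u.powerset, p ^ (u \ w).card *
            ((1 - p) ^ w.card * ∑ v ∈ u.powerset.filter (fun v => Disjoint w v), ℙ (G v)) := by
          refine Finset.sum_congr rfl fun w _ => ?_
          congr 1
          rw [Finset.mul_sum, Finset.sum_filter]
          refine Finset.sum_congr rfl fun v _ => ?_
          rw [hprodite w v]
          by_cases h : Disjoint w v <;> simp [h]
      _ ≤ ∑ w ∈ u.powerset, p ^ (u \ w).card * ((1 - p) ^ w.card * (β * q ^ w.card)) := by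
          refine Finset.sum_le_sum fun w hw => ?_
          exact mul_le_mul_right (mul_le_mul_right (hinner w hw) _) _
      _ = β * ∑ w ∈ u.powerset, (∏ j ∈ w, (1 - p) * q) * ∏ j ∈ u \ w, p := by
          rw [Finset.mul_sum]
          refine Finset.sum_congr rfl fun w _ => ?_
          rw [Finset.prod_const, Finset.prod_const, mul_pow]
          ring
      _ = β * ∏ _j ∈ u, ((1 - p) * q + p) := by
          rw [← Finset.prod_add]
  -- the per-index probability of the complemented product event
  have hrj : ∀ j : Fin N, ℙ {ω | ¬(x j ω ∈ A ∧ y j ω ∈ B)} = (1 - p) * q + p := by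
    intro j
    have hset : {ω | ¬(x j ω ∈ A ∧ y j ω ∈ B)}
        = {ω | x j ω ∉ A} ∪ ({ω | x j ω ∈ A} ∩ {ω | y j ω ∉ B}) := by
      ext ω
      by_cases h : x j ω ∈ A <;> simp [h]
    have hdis : Disjoint {ω | x j ω ∉ A} ({ω | x j ω ∈ A} ∩ {ω | y j ω ∉ B}) := by
      rw [Set.disjoint_left]
      rintro ω h1 ⟨h2, _⟩
      exact h1 h2
    have hm2 : MeasurableSet ({ω | x j ω ∈ A} ∩ {ω | y j ω ∉ B}) :=
      ((hxm j) hA).inter ((hym j) hB.compl)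
    have hXA : ℙ {ω | x j ω ∈ A} = 1 - p := by
      have hcompl : {ω | x j ω ∈ A} = {ω | x j ω ∉ A}ᶜ := by ext ω; simp
      rw [hcompl, prob_compl_eq_one_sub (show MeasurableSet {ω | x j ω ∉ A} from (hxm j) hA.compl), hpj j]
    have hind : ℙ ({ω | x j ω ∈ A} ∩ {ω | y j ω ∉ B}) = (1 - p) * q := by
      have key := hindep.measure_inter_preimage_eq_mul
        ((fun f : Fin N → Fin d' → ℝ => f j) ⁻¹' A)
        ((fun g : Fin N → Fin d'' → ℝ => g j) ⁻¹' Bᶜ)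
        (measurable_pi_apply j hA) (measurable_pi_apply j hB.compl)
      calc ℙ ({ω | x j ω ∈ A} ∩ {ω | y j ω ∉ B})
          = ℙ {ω | x j ω ∈ A} * ℙ {ω | y j ω ∉ B} := key
        _ = (1 - p) * q := by rw [hXA, hqj j]
    rw [hset, measure_union hdis hm2, hind, hpj j, add_comm]
  -- putting everything together
  calc ℙ (⋂ j ∈ u, {ω | ¬(x j ω ∈ A ∧ y j ω ∈ B)})
      ≤ ℙ (⋃ v ∈ u.powerset, (E v ∩ G v)) := measure_mono hcover
    _ ≤ ∑ v ∈ u.powerset, ℙ (E v ∩ G v) := measure_biUnion_finset_le _ _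
    _ = ∑ v ∈ u.powerset, ℙ (E v) * ℙ (G v) := Finset.sum_congr rfl fun v _ => hstep2 v
    _ ≤ ∑ v ∈ u.powerset, (α * p ^ v.card) * ℙ (G v) :=
        Finset.sum_le_sum fun v _ => mul_le_mul_left (hE_le v) _
    _ = α * ∑ v ∈ u.powerset, p ^ v.card * ℙ (G v) := by
        rw [Finset.mul_sum]
        exact Finset.sum_congr rfl fun v _ => by ring
    _ ≤ α * (β * ∏ _j ∈ u, ((1 - p) * q + p)) := mul_le_mul_right hsum _
    _ = α * β * ∏ j ∈ u, ℙ {ω | ¬(x j ω ∈ A ∧ y j ω ∈ B)} := by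
        rw [Finset.prod_congr rfl fun j _ => hrj j]
        ring
end

section
/- For any d ≥ 1 and δ ∈ (0,1], there exists a δ-cover of [0,1)^d of cardinality at most 2^d (d^d/d!) (δ^{-1}+1)^d; in particular N(d,δ) ≤ (2e)^d (1+δ^{-1})^d. -/
/-!
By induction on the dimension we build bracket covers: families of pairs `(x, z)` whose boxes
`[x, z]` cover `[0,1]^d`, each of width `∏ z - ∏ x ≤ δ`. Slice the cube along the last
coordinate at the levels `t_j = max (1 - j h) 0`, `h = δ / (d + 1)`, and cover the slab
`[t_{j+1}, t_j]` by a `d`-dimensional bracket cover of width `d h / t_j`, extended in the last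
coordinate by `t_{j+1}` and `t_j`: the widths add up to `t_j · d h / t_j + h = δ`. With
`c = (d + 1)(1 + δ⁻¹)` the `j`-th slab needs `(c - 1 - j)^d / d!` brackets, and comparing the sum
of these with `∫₀^c x^d dx` bounds the number of brackets by
`((d + 1)(1 + δ⁻¹))^(d + 1) / (d + 1)!`.
The endpoints of the brackets form a δ-cover with at most twice as many points.
-/

/-- A δ-cover of [0,1)^d. -/
def IsDeltaCover (d : ℕ) (δ : ℝ) (Γ : Finset (Fin d → ℝ)) : Prop :=
  (↑Γ : Set (Fin d → ℝ)) ⊆ Set.Icc 0 1 ∧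
    ∀ y ∈ Set.Ico (0 : Fin d → ℝ) 1, ∃ x ∈ insert (0 : Fin d → ℝ) Γ,
      ∃ z ∈ insert (0 : Fin d → ℝ) Γ,
        x ≤ y ∧ y ≤ z ∧ (∏ i, z i) - ∏ i, x i ≤ δ

open Finset

def IsBracketCover (d : ℕ) (δ : ℝ) (F : Finset ((Fin d → ℝ) × (Fin d → ℝ))) : Prop :=
  (∀ p ∈ F, p.1 ∈ Set.Icc 0 1 ∧ p.2 ∈ Set.Icc 0 1) ∧
    ∀ y ∈ Set.Icc (0 : Fin d → ℝ) 1, ∃ p ∈ F, p.1 ≤ y ∧ y ≤ p.2 ∧ (∏ i, p.2 i) - ∏ i, p.1 i ≤ δ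

theorem isBracketCover_zero {δ : ℝ} (hδ : 0 ≤ δ) : IsBracketCover 0 δ {(0, 0)} := by
  refine ⟨by simp, fun y _ => ⟨(0, 0), mem_singleton_self _, ?_, ?_, by simpa using hδ⟩⟩ <;>
    exact fun i => i.elim0

theorem snoc_mem_Icc_iff {α : Type*} [Preorder α] [Zero α] [One α] {d : ℕ} {f : Fin d → α}
    {a : α} :
    (Fin.snoc f a : Fin (d + 1) → α) ∈ Set.Icc 0 1 ↔ f ∈ Set.Icc 0 1 ∧ a ∈ Set.Icc 0 1 := by
  simp only [Set.mem_Icc, Pi.le_def, Fin.forall_fin_succ', Fin.snoc_castSucc, Fin.snoc_last,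
    Pi.zero_apply, Pi.one_apply]
  tauto

theorem snoc_le_snoc_iff {α : Type*} [Preorder α] {d : ℕ} {f g : Fin d → α} {a b : α} :
    (Fin.snoc f a : Fin (d + 1) → α) ≤ Fin.snoc g b ↔ f ≤ g ∧ a ≤ b := by
  simp only [Pi.le_def, Fin.forall_fin_succ', Fin.snoc_castSucc, Fin.snoc_last]

def slabLift {d : ℕ} (a b : ℝ) (p : (Fin d → ℝ) × (Fin d → ℝ)) :
    (Fin (d + 1) → ℝ) × (Fin (d + 1) → ℝ) :=
  (Fin.snoc p.1 a, Fin.snoc p.2 b)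

theorem prod_slabLift_snd_sub_prod_fst {d : ℕ} (a b : ℝ) (p : (Fin d → ℝ) × (Fin d → ℝ)) :
    (∏ i, (slabLift a b p).2 i) - ∏ i, (slabLift a b p).1 i
      = b * ((∏ i, p.2 i) - ∏ i, p.1 i) + (b - a) * ∏ i, p.1 i := by
  simp only [slabLift, Fin.prod_univ_castSucc, Fin.snoc_castSucc, Fin.snoc_last]
  ring

def level (h : ℝ) (j : ℕ) : ℝ := max (1 - j * h) 0

section level

variable {h : ℝ}

theorem level_mem_Icc (hh : 0 ≤ h) (j : ℕ) : level h j ∈ Set.Icc 0 1 :=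
  ⟨le_max_right _ _, max_le (sub_le_self _ (mul_nonneg j.cast_nonneg hh)) zero_le_one⟩

theorem level_sub_level_succ_le (hh : 0 ≤ h) (j : ℕ) : level h j - level h (j + 1) ≤ h := by
  rw [sub_le_iff_le_add]
  unfold level
  have h₁ := le_max_left (1 - (j + 1 : ℕ) * h) 0
  have h₂ := le_max_right (1 - (j + 1 : ℕ) * h) 0
  push_cast at h₁ h₂ ⊢
  exact max_le (by linarith) (by linarith)

theorem mul_lt_one_of_lt_ceil_inv (hh : 0 < h) {j : ℕ} (hj : j < ⌈h⁻¹⌉₊) : j * h < 1 := by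
  rw [← lt_div_iff₀ hh, one_div]
  exact Nat.lt_ceil.mp hj

theorem level_of_lt_ceil (hh : 0 < h) {j : ℕ} (hj : j < ⌈h⁻¹⌉₊) : level h j = 1 - j * h :=
  max_eq_left (by linarith [mul_lt_one_of_lt_ceil_inv hh hj])

theorem level_pos_of_lt_ceil (hh : 0 < h) {j : ℕ} (hj : j < ⌈h⁻¹⌉₊) : 0 < level h j := by
  rw [level_of_lt_ceil hh hj]
  linarith [mul_lt_one_of_lt_ceil_inv hh hj]

theorem exists_level_succ_le_le_level (hh : 0 < h) {s : ℝ} (hs : s ∈ Set.Icc 0 1) :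
    ∃ j < ⌈h⁻¹⌉₊, level h (j + 1) ≤ s ∧ s ≤ level h j := by
  have hν : 0 < ⌈h⁻¹⌉₊ := Nat.ceil_pos.mpr (inv_pos.mpr hh)
  set k := ⌊(1 - s) / h⌋₊
  have hk : (k : ℝ) * h ≤ 1 - s :=
    (le_div_iff₀ hh).mp (Nat.floor_le (div_nonneg (by linarith [hs.2]) hh.le))
  refine ⟨min k (⌈h⁻¹⌉₊ - 1), by omega, ?_, ?_⟩
  · rcases min_choice k (⌈h⁻¹⌉₊ - 1) with hj | hj <;> rw [hj] <;> refine max_le ?_ hs.1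
    · have := (div_lt_iff₀ hh).mp (Nat.lt_floor_add_one ((1 - s) / h))
      push_cast
      linarith
    · have := (inv_le_iff_one_le_mul₀ hh).mp (Nat.le_ceil h⁻¹)
      rw [Nat.sub_add_cancel hν]
      linarith [hs.1]
  · have : ((min k (⌈h⁻¹⌉₊ - 1) : ℕ) : ℝ) ≤ k := by exact_mod_cast min_le_left _ _
    exact le_max_of_le_left (by linarith [mul_le_mul_of_nonneg_right this hh.le])

end level

theorem isBracketCover_biUnion_slabLift {d : ℕ} {δ h : ℝ} (hh : 0 < h) {ε : ℕ → ℝ}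
    {F : ℕ → Finset ((Fin d → ℝ) × (Fin d → ℝ))}
    (hF : ∀ j < ⌈h⁻¹⌉₊, IsBracketCover d (ε j) (F j))
    (hε : ∀ j < ⌈h⁻¹⌉₊, level h j * ε j + h ≤ δ) :
    IsBracketCover (d + 1) δ
      ((range ⌈h⁻¹⌉₊).biUnion fun j => (F j).image (slabLift (level h (j + 1)) (level h j))) := by
  constructor
  · intro p hp
    simp only [mem_biUnion, mem_range, mem_image] at hp
    obtain ⟨j, hj, q, hq, rfl⟩ := hp
    obtain ⟨hq₁, hq₂⟩ := (hF j hj).1 q hq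
    exact ⟨snoc_mem_Icc_iff.mpr ⟨hq₁, level_mem_Icc hh.le _⟩,
      snoc_mem_Icc_iff.mpr ⟨hq₂, level_mem_Icc hh.le _⟩⟩
  · intro y hy
    rw [← Fin.snoc_init_self y, snoc_mem_Icc_iff] at hy
    obtain ⟨j, hj, hlo, hhi⟩ := exists_level_succ_le_le_level hh hy.2
    obtain ⟨q, hq, hq₁, hq₂, hqε⟩ := (hF j hj).2 _ hy.1
    refine ⟨slabLift (level h (j + 1)) (level h j) q,
      mem_biUnion.mpr ⟨j, mem_range.mpr hj, mem_image_of_mem _ hq⟩, ?_, ?_, ?_⟩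
    · rw [← Fin.snoc_init_self y]
      exact snoc_le_snoc_iff.mpr ⟨hq₁, hlo⟩
    · rw [← Fin.snoc_init_self y]
      exact snoc_le_snoc_iff.mpr ⟨hq₂, hhi⟩
    · obtain ⟨hq₀, hq₁⟩ := ((hF j hj).1 q hq).1
      have hprod : ∏ i, q.1 i ≤ 1 := prod_le_one (fun i _ => hq₀ i) (fun i _ => hq₁ i)
      have hprod₀ : 0 ≤ ∏ i, q.1 i := prod_nonneg fun i _ => hq₀ i
      have hstep := level_sub_level_succ_le hh.le j
      rw [prod_slabLift_snd_sub_prod_fst]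
      calc _ ≤ level h j * ε j + h * 1 := by
            gcongr
            exact (level_mem_Icc hh.le j).1
        _ ≤ δ := by simpa using hε j hj

theorem sum_range_sub_pow_div_factorial_le (d ν : ℕ) {c : ℝ} (hν : (ν : ℝ) ≤ c) :
    ∑ j ∈ range ν, (c - 1 - j) ^ d / d.factorial ≤ c ^ (d + 1) / (d + 1).factorial := by
  have hanti : AntitoneOn (fun x : ℝ => (c - x) ^ d) (Set.Icc 0 (0 + ν)) :=
    fun x _ y hy hxy => pow_le_pow_left₀ (by linarith [hy.2]) (by linarith) d
  have hsum := hanti.sum_le_integral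
  rw [intervalIntegral.integral_comp_sub_left (fun x => x ^ d), integral_pow] at hsum
  have hrest : 0 ≤ (c - ν) ^ (d + 1) := pow_nonneg (by linarith) _
  have : ∑ j ∈ range ν, (c - 1 - j) ^ d ≤ c ^ (d + 1) / (d + 1) := by
    refine le_trans (by simpa [sub_sub, add_comm] using hsum) ?_
    gcongr
    linarith
  rw [← sum_div, Nat.factorial_succ, Nat.cast_mul, ← div_div]
  push_cast
  gcongr

theorem card_biUnion_image_le {α β ι : Type*} [DecidableEq β] (s : Finset ι)
    (F : ι → Finset α) (f : ι → α → β) :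
    ((s.biUnion fun j => (F j).image (f j)).card : ℝ) ≤ ∑ j ∈ s, ((F j).card : ℝ) := by
  exact_mod_cast card_biUnion_le.trans (sum_le_sum fun j _ => card_image_le)

theorem exists_isBracketCover_one {δ : ℝ} (hδ : 0 < δ) :
    ∃ F, IsBracketCover 1 δ F ∧ (F.card : ℝ) ≤ 1 + δ⁻¹ := by
  refine ⟨_, isBracketCover_biUnion_slabLift hδ (fun _ _ => isBracketCover_zero le_rfl)
    (ε := 0) (fun j _ => by simp), ?_⟩
  refine (card_biUnion_image_le _ _ _).trans ?_
  simpa [add_comm] using (Nat.ceil_lt_add_one (inv_pos.mpr hδ).le).le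

theorem exists_isBracketCover_succ {d : ℕ} (hd : 1 ≤ d)
    (ih : ∀ {η : ℝ}, 0 < η →
      ∃ F, IsBracketCover d η F ∧ (F.card : ℝ) ≤ (d * (1 + η⁻¹)) ^ d / d.factorial)
    {δ : ℝ} (hδ : 0 < δ) :
    ∃ F, IsBracketCover (d + 1) δ F ∧
      (F.card : ℝ) ≤ ((d + 1) * (1 + δ⁻¹)) ^ (d + 1) / (d + 1).factorial := by
  set h := δ / (d + 1)
  have hh : 0 < h := by positivity
  set ε : ℕ → ℝ := fun j => d * h / level h j
  have hcovers : ∀ j, ∃ F, j < ⌈h⁻¹⌉₊ →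
      IsBracketCover d (ε j) F ∧ (F.card : ℝ) ≤ (d * (1 + (ε j)⁻¹)) ^ d / d.factorial := by
    intro j
    by_cases hj : j < ⌈h⁻¹⌉₊
    · obtain ⟨F, hF⟩ := ih (by have := level_pos_of_lt_ceil hh hj; positivity : 0 < ε j)
      exact ⟨F, fun _ => hF⟩
    · exact ⟨∅, fun hj' => absurd hj' hj⟩
  choose F hF using hcovers
  refine ⟨_, isBracketCover_biUnion_slabLift hh (fun j hj => (hF j hj).1) (ε := ε) ?_, ?_⟩
  · intro j hj
    rw [show level h j * ε j = d * h from mul_div_cancel₀ _ (level_pos_of_lt_ceil hh hj).ne']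
    exact le_of_eq (by simp only [h]; field_simp)
  · set c : ℝ := (d + 1) * (1 + δ⁻¹)
    have hd₀ : (d : ℝ) ≠ 0 := by positivity
    have hterm : ∀ j < ⌈h⁻¹⌉₊, (d : ℝ) * (1 + (ε j)⁻¹) = c - 1 - j := fun j hj => by
      simp only [ε, c, h, level_of_lt_ceil hh hj]
      field_simp
      ring
    have hν : (⌈h⁻¹⌉₊ : ℝ) ≤ c := by
      have := Nat.ceil_lt_add_one (inv_pos.mpr hh).le
      simp only [c, h, inv_div] at this ⊢
      rw [mul_add, mul_one, ← div_eq_mul_inv]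
      linarith [d.cast_nonneg (α := ℝ)]
    calc _ ≤ ∑ j ∈ range ⌈h⁻¹⌉₊, (c - 1 - j) ^ d / d.factorial := by
          refine (card_biUnion_image_le _ _ _).trans (sum_le_sum fun j hj => ?_)
          rw [mem_range] at hj
          simpa only [hterm j hj] using (hF j hj).2
      _ ≤ c ^ (d + 1) / (d + 1).factorial := sum_range_sub_pow_div_factorial_le d _ hν

theorem exists_isBracketCover (d : ℕ) (hd : 1 ≤ d) {δ : ℝ} (hδ : 0 < δ) :
    ∃ F, IsBracketCover d δ F ∧ (F.card : ℝ) ≤ (d * (1 + δ⁻¹)) ^ d / d.factorial := by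
  induction d, hd using Nat.le_induction generalizing δ with
  | base => simpa using exists_isBracketCover_one hδ
  | succ d hd ih => simpa using exists_isBracketCover_succ hd ih hδ

theorem card_image_fst_union_image_snd_le {α : Type*} [DecidableEq α] (F : Finset (α × α)) :
    (F.image Prod.fst ∪ F.image Prod.snd).card ≤ 2 * F.card := by
  grind [card_union_le, card_image_le]

theorem IsBracketCover.isDeltaCover {d : ℕ} {δ : ℝ}
    {F : Finset ((Fin d → ℝ) × (Fin d → ℝ))} (hF : IsBracketCover d δ F) :
    IsDeltaCover d δ (F.image Prod.fst ∪ F.image Prod.snd) := by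
  refine ⟨fun x hx => ?_, fun y hy => ?_⟩
  · simp only [coe_union, coe_image, Set.mem_union, Set.mem_image, mem_coe] at hx
    rcases hx with ⟨p, hp, rfl⟩ | ⟨p, hp, rfl⟩
    exacts [(hF.1 p hp).1, (hF.1 p hp).2]
  · obtain ⟨p, hp, hle, hge, hδ⟩ := hF.2 y (Set.Ico_subset_Icc_self hy)
    exact ⟨p.1, mem_insert_of_mem (mem_union_left _ (mem_image_of_mem _ hp)),
      p.2, mem_insert_of_mem (mem_union_right _ (mem_image_of_mem _ hp)), hle, hge, hδ⟩

/-- Existence of a δ-cover of [0,1)^d of cardinality at most 2^d (d^d/d!) (δ⁻¹+1)^d;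
in particular N(d,δ) ≤ (2e)^d (1+δ⁻¹)^d. -/
theorem stmt_10 (d : ℕ) (hd : 1 ≤ d) (δ : ℝ) (hδ : δ ∈ Set.Ioc (0 : ℝ) 1) :
    ∃ Γ : Finset (Fin d → ℝ), IsDeltaCover d δ Γ ∧
      (Γ.card : ℝ) ≤ 2 ^ d * ((d : ℝ) ^ d / (d.factorial : ℝ)) * (δ⁻¹ + 1) ^ d ∧
      (Γ.card : ℝ) ≤ (2 * Real.exp 1) ^ d * (1 + δ⁻¹) ^ d := by
  obtain ⟨F, hF, hcard⟩ := exists_isBracketCover d hd hδ.1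
  have hbound : ((F.image Prod.fst ∪ F.image Prod.snd).card : ℝ)
      ≤ 2 ^ d * ((d : ℝ) ^ d / (d.factorial : ℝ)) * (δ⁻¹ + 1) ^ d :=
    calc _ ≤ 2 * (F.card : ℝ) := by exact_mod_cast card_image_fst_union_image_snd_le F
      _ ≤ 2 ^ d * ((d * (1 + δ⁻¹)) ^ d / d.factorial) := by
          gcongr
          exact le_self_pow₀ one_le_two (by omega)
      _ = _ := by rw [mul_pow, add_comm 1]; ring
  refine ⟨_, hF.isDeltaCover, hbound, hbound.trans ?_⟩
  have hexp := Real.pow_div_factorial_le_exp (x := d) d.cast_nonneg d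
  rw [← Real.exp_one_pow] at hexp
  calc _ ≤ 2 ^ d * Real.exp 1 ^ d * (δ⁻¹ + 1) ^ d := by
        gcongr
        exact pow_nonneg (by linarith [inv_pos.mpr hδ.1]) d
    _ = _ := by rw [mul_pow, add_comm δ⁻¹]
end

section
/- The function F : [0,1]² → [0,1] defined by F(x,y) = min{x, y, (x²+y²)/2} is a copula: F(0,·) = F(·,0) = 0, F(x,1) = x, F(1,y) = y, F is symmetric, continuous, and 2-increasing (quasi-monotone), i.e., F(b_1,b_2) − F(a_1,b_2) − F(b_1,a_2) + F(a_1,a_2) ≥ 0 for all a ≤ b in [0,1]². -/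
set_option maxHeartbeats 2000000 in
private lemma stmt_12_key (a₁ a₂ b₁ b₂ : ℝ) (ha₁ : a₁ ∈ Set.Icc (0:ℝ) 1)
    (ha₂ : a₂ ∈ Set.Icc (0:ℝ) 1) (hb₁ : b₁ ∈ Set.Icc (0:ℝ) 1) (hb₂ : b₂ ∈ Set.Icc (0:ℝ) 1)
    (h₁ : a₁ ≤ b₁) (h₂ : a₂ ≤ b₂) :
    0 ≤ min (min b₁ b₂) ((b₁ ^ 2 + b₂ ^ 2) / 2) - min (min a₁ b₂) ((a₁ ^ 2 + b₂ ^ 2) / 2)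
      - min (min b₁ a₂) ((b₁ ^ 2 + a₂ ^ 2) / 2) + min (min a₁ a₂) ((a₁ ^ 2 + a₂ ^ 2) / 2) := by
  obtain ⟨ha₁0, ha₁1⟩ := ha₁; obtain ⟨ha₂0, ha₂1⟩ := ha₂
  obtain ⟨hb₁0, hb₁1⟩ := hb₁; obtain ⟨hb₂0, hb₂1⟩ := hb₂
  have hp1 : min (min a₁ b₂) ((a₁ ^ 2 + b₂ ^ 2) / 2) ≤ a₁ :=
    le_trans (min_le_left _ _) (min_le_left _ _)
  have hp2 : min (min a₁ b₂) ((a₁ ^ 2 + b₂ ^ 2) / 2) ≤ b₂ :=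
    le_trans (min_le_left _ _) (min_le_right _ _)
  have hp3 : min (min a₁ b₂) ((a₁ ^ 2 + b₂ ^ 2) / 2) ≤ (a₁ ^ 2 + b₂ ^ 2) / 2 :=
    min_le_right _ _
  have hq1 : min (min b₁ a₂) ((b₁ ^ 2 + a₂ ^ 2) / 2) ≤ b₁ :=
    le_trans (min_le_left _ _) (min_le_left _ _)
  have hq2 : min (min b₁ a₂) ((b₁ ^ 2 + a₂ ^ 2) / 2) ≤ a₂ :=
    le_trans (min_le_left _ _) (min_le_right _ _)
  have hq3 : min (min b₁ a₂) ((b₁ ^ 2 + a₂ ^ 2) / 2) ≤ (b₁ ^ 2 + a₂ ^ 2) / 2 :=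
    min_le_right _ _
  set p := min (min a₁ b₂) ((a₁ ^ 2 + b₂ ^ 2) / 2) with hp
  set q := min (min b₁ a₂) ((b₁ ^ 2 + a₂ ^ 2) / 2) with hq
  rcases min_cases (min b₁ b₂) ((b₁ ^ 2 + b₂ ^ 2) / 2) with ⟨hB, hB'⟩ | ⟨hB, hB'⟩ <;>
  rcases min_cases b₁ b₂ with ⟨hb, hb'⟩ | ⟨hb, hb'⟩ <;>
  rcases min_cases (min a₁ a₂) ((a₁ ^ 2 + a₂ ^ 2) / 2) with ⟨hA, hA'⟩ | ⟨hA, hA'⟩ <;>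
  rcases min_cases a₁ a₂ with ⟨ha, ha'⟩ | ⟨ha, ha'⟩ <;>
  rw [hB, hA] <;> rw [hb] at * <;> rw [ha] at * <;>
  nlinarith [mul_nonneg (sub_nonneg.2 h₁) (by linarith : (0:ℝ) ≤ 2 - a₁ - b₁),
    mul_nonneg (sub_nonneg.2 h₂) (by linarith : (0:ℝ) ≤ 2 - a₂ - b₂),
    mul_nonneg (sub_nonneg.2 h₁) (by linarith : (0:ℝ) ≤ a₁ + b₁),
    mul_nonneg (sub_nonneg.2 h₂) (by linarith : (0:ℝ) ≤ a₂ + b₂)]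

/-- F(x,y) = min{x, y, (x²+y²)/2} is a copula: boundary conditions, symmetry, continuity,
and the 2-increasing (quasi-monotone) property. -/
theorem stmt_12 :
    let F : ℝ → ℝ → ℝ := fun x y => min (min x y) ((x ^ 2 + y ^ 2) / 2)
    (∀ x ∈ Set.Icc (0 : ℝ) 1, F x 0 = 0) ∧
    (∀ y ∈ Set.Icc (0 : ℝ) 1, F 0 y = 0) ∧
    (∀ x ∈ Set.Icc (0 : ℝ) 1, F x 1 = x) ∧
    (∀ y ∈ Set.Icc (0 : ℝ) 1, F 1 y = y) ∧
    (∀ x y : ℝ, F x y = F y x) ∧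
    Continuous (fun p : ℝ × ℝ => F p.1 p.2) ∧
    (∀ a₁ a₂ b₁ b₂ : ℝ, a₁ ∈ Set.Icc (0 : ℝ) 1 → a₂ ∈ Set.Icc (0 : ℝ) 1 →
      b₁ ∈ Set.Icc (0 : ℝ) 1 → b₂ ∈ Set.Icc (0 : ℝ) 1 → a₁ ≤ b₁ → a₂ ≤ b₂ →
      0 ≤ F b₁ b₂ - F a₁ b₂ - F b₁ a₂ + F a₁ a₂) := by
  intro F
  refine ⟨?_, ?_, ?_, ?_, ?_, ?_, ?_⟩
  · intro x hx
    obtain ⟨h0, h1⟩ := hx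
    show min (min x 0) ((x ^ 2 + 0 ^ 2) / 2) = 0
    rw [min_eq_right h0, min_eq_left (by positivity)]
  · intro y hy
    obtain ⟨h0, h1⟩ := hy
    show min (min 0 y) ((0 ^ 2 + y ^ 2) / 2) = 0
    rw [min_eq_left h0, min_eq_left (by positivity)]
  · intro x hx
    obtain ⟨h0, h1⟩ := hx
    show min (min x 1) ((x ^ 2 + 1 ^ 2) / 2) = x
    rw [min_eq_left h1, min_eq_left (by nlinarith [sq_nonneg (x - 1)])]
  · intro y hy
    obtain ⟨h0, h1⟩ := hy
    show min (min 1 y) ((1 ^ 2 + y ^ 2) / 2) = y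
    rw [min_eq_right h1, min_eq_left (by nlinarith [sq_nonneg (y - 1)])]
  · intro x y
    show min (min x y) ((x ^ 2 + y ^ 2) / 2) = min (min y x) ((y ^ 2 + x ^ 2) / 2)
    rw [min_comm x y, add_comm (x ^ 2)]
  · exact (continuous_fst.min continuous_snd).min
      (((continuous_fst.pow 2).add (continuous_snd.pow 2)).div_const 2)
  · intro a₁ a₂ b₁ b₂ ha₁ ha₂ hb₁ hb₂ h₁ h₂
    exact stmt_12_key a₁ a₂ b₁ b₂ ha₁ ha₂ hb₁ hb₂ h₁ h₂
end

section
/- Let (p_1,p_2) be a pair of random points in [0,1) with joint CDF F(x,y) = min{x, y, (x²+y²)/2}. Then for every q ∈ [0,1), P(p_1 < q, p_2 < q) = q² ≤ P(p_1 < q)P(p_2 < q), so the pair is C_0^1-negatively dependent; but P(p_1 ≥ 3/4, p_2 ≥ 1/4) = 1/4 > (1/4)(3/4) = P(p_1 ≥ 3/4)P(p_2 ≥ 1/4), so the pair is not pairwise negatively dependent. -/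
open MeasureTheory ProbabilityTheory

/-- The pair with joint CDF F(x,y) = min{x,y,(x²+y²)/2} is C_0^1-negatively dependent but not
pairwise negatively dependent. -/
theorem stmt_13 {Ω : Type*} [MeasureSpace Ω] [IsProbabilityMeasure (ℙ : Measure Ω)]
    (p₁ p₂ : Ω → ℝ) (h₁ : Measurable p₁) (h₂ : Measurable p₂)
    (hrange : ∀ ω, p₁ ω ∈ Set.Ico (0 : ℝ) 1 ∧ p₂ ω ∈ Set.Ico (0 : ℝ) 1)
    (hF : ∀ x ∈ Set.Icc (0 : ℝ) 1, ∀ y ∈ Set.Icc (0 : ℝ) 1,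
      ℙ {ω | p₁ ω < x ∧ p₂ ω < y} =
        ENNReal.ofReal (min (min x y) ((x ^ 2 + y ^ 2) / 2))) :
    (∀ q ∈ Set.Ico (0 : ℝ) 1,
      ℙ {ω | p₁ ω < q ∧ p₂ ω < q} = ENNReal.ofReal (q ^ 2) ∧
      ℙ {ω | p₁ ω < q ∧ p₂ ω < q} ≤ ℙ {ω | p₁ ω < q} * ℙ {ω | p₂ ω < q}) ∧
    ℙ {ω | 3 / 4 ≤ p₁ ω ∧ 1 / 4 ≤ p₂ ω} = ENNReal.ofReal (1 / 4) ∧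
    ℙ {ω | 3 / 4 ≤ p₁ ω ∧ 1 / 4 ≤ p₂ ω} >
      ℙ {ω | 3 / 4 ≤ p₁ ω} * ℙ {ω | 1 / 4 ≤ p₂ ω} := by
  have h1r : ∀ ω, p₁ ω < 1 := fun ω => (hrange ω).1.2
  have h2r : ∀ ω, p₂ ω < 1 := fun ω => (hrange ω).2.2
  -- marginals
  have hm1 : ∀ x ∈ Set.Icc (0:ℝ) 1, ℙ {ω | p₁ ω < x} = ENNReal.ofReal x := by
    intro x hx
    have hs : {ω | p₁ ω < x} = {ω | p₁ ω < x ∧ p₂ ω < 1} := by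
      ext ω; simp [h2r ω]
    rw [hs, hF x hx 1 (by norm_num)]
    congr 1
    have ha : x ≤ (x ^ 2 + 1 ^ 2) / 2 := by nlinarith [sq_nonneg (x - 1)]
    rw [min_eq_left hx.2, min_eq_left ha]
  have hm2 : ∀ y ∈ Set.Icc (0:ℝ) 1, ℙ {ω | p₂ ω < y} = ENNReal.ofReal y := by
    intro y hy
    have hs : {ω | p₂ ω < y} = {ω | p₁ ω < 1 ∧ p₂ ω < y} := by
      ext ω; simp [h1r ω]
    rw [hs, hF 1 (by norm_num) y hy]
    congr 1
    have ha : y ≤ (1 ^ 2 + y ^ 2) / 2 := by nlinarith [sq_nonneg (y - 1)]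
    rw [min_comm 1 y, min_eq_left hy.2, min_eq_left ha]
  -- second part data
  have hA : ℙ {ω | p₁ ω < 3/4} = ENNReal.ofReal (3/4) := hm1 _ (by norm_num)
  have hB : ℙ {ω | p₂ ω < 1/4} = ENNReal.ofReal (1/4) := hm2 _ (by norm_num)
  have hAB : ℙ ({ω | p₁ ω < 3/4} ∩ {ω | p₂ ω < 1/4}) = ENNReal.ofReal (1/4) := by
    have hs : {ω | p₁ ω < 3/4} ∩ {ω | p₂ ω < 1/4} = {ω | p₁ ω < 3/4 ∧ p₂ ω < 1/4} := rfl
    rw [hs, hF (3/4) (by norm_num) (1/4) (by norm_num)]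
    norm_num [min_def]
  have hAm : MeasurableSet {ω | p₁ ω < 3/4} := h₁ measurableSet_Iio
  have hBm : MeasurableSet {ω | p₂ ω < 1/4} := h₂ measurableSet_Iio
  have hUnion : ℙ ({ω | p₁ ω < 3/4} ∪ {ω | p₂ ω < 1/4}) = ENNReal.ofReal (3/4) := by
    have h := measure_union_add_inter (μ := (ℙ : Measure Ω)) {ω | p₁ ω < 3/4} hBm
    rw [hAB, hA, hB] at h
    have h4 : (ENNReal.ofReal (1/4)) ≠ ⊤ := ENNReal.ofReal_ne_top
    exact WithTop.add_right_cancel h4 h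
  have hCompl : ℙ {ω | 3/4 ≤ p₁ ω ∧ 1/4 ≤ p₂ ω} = ENNReal.ofReal (1/4) := by
    have hs : {ω | 3/4 ≤ p₁ ω ∧ 1/4 ≤ p₂ ω} =
        ({ω | p₁ ω < 3/4} ∪ {ω | p₂ ω < 1/4})ᶜ := by
      ext ω; simp [not_lt, not_or]
    rw [hs, measure_compl (hAm.union hBm) (measure_ne_top _ _), hUnion, measure_univ]
    rw [← ENNReal.ofReal_one, ← ENNReal.ofReal_sub _ (by norm_num)]
    norm_num
  have hC1 : ℙ {ω | 3/4 ≤ p₁ ω} = ENNReal.ofReal (1/4) := by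
    have hs : {ω | 3/4 ≤ p₁ ω} = {ω | p₁ ω < 3/4}ᶜ := by
      ext ω; simp [not_lt]
    rw [hs, measure_compl hAm (measure_ne_top _ _), hA, measure_univ]
    rw [← ENNReal.ofReal_one, ← ENNReal.ofReal_sub _ (by norm_num)]
    norm_num
  have hC2 : ℙ {ω | 1/4 ≤ p₂ ω} = ENNReal.ofReal (3/4) := by
    have hs : {ω | 1/4 ≤ p₂ ω} = {ω | p₂ ω < 1/4}ᶜ := by
      ext ω; simp [not_lt]
    rw [hs, measure_compl hBm (measure_ne_top _ _), hB, measure_univ]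
    rw [← ENNReal.ofReal_one, ← ENNReal.ofReal_sub _ (by norm_num)]
    norm_num
  refine ⟨?_, hCompl, ?_⟩
  · intro q hq
    have hq01 : q ∈ Set.Icc (0:ℝ) 1 := ⟨hq.1, hq.2.le⟩
    have hjoint : ℙ {ω | p₁ ω < q ∧ p₂ ω < q} = ENNReal.ofReal (q ^ 2) := by
      rw [hF q hq01 q hq01]
      congr 1
      have he : (q ^ 2 + q ^ 2) / 2 = q ^ 2 := by ring
      rw [he, min_self]
      exact min_eq_right (by nlinarith [hq.1, hq.2.le])
    refine ⟨hjoint, ?_⟩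
    rw [hjoint, hm1 q hq01, hm2 q hq01, ← ENNReal.ofReal_mul hq.1]
    exact le_of_eq (by rw [sq])
  · rw [hCompl, hC1, hC2, ← ENNReal.ofReal_mul (by norm_num)]
    exact ENNReal.ofReal_lt_ofReal_iff (by norm_num) |>.mpr (by norm_num)
end

section
/- Let N, d ∈ ℕ, ρ ≥ 0, and let P = (p_1,...,p_N) be a sampling scheme in [0,1)^d such that for every nonempty u ⊆ [d], the projection of P onto the coordinates in u is D_0^{|u|}-e^{ρ|u|}-negatively dependent. Assume (from Theorem main_theo_GH) that for each nonempty u and c > 0, P(D*_N(P^u) > c√(|u|/N)) < e^{−(1.674c² − 10.7042 − ρ)|u|}. Then for any weights (γ_u) and any c > 0, the weighted star discrepancy satisfies D*_{N,γ}(P) ≤ max_{∅≠u⊆[d]} c γ_u √(|u|/N) with probability at least 2 − (1 + e^{−(1.674c² − 10.7042 − ρ)})^d. -/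
open MeasureTheory ProbabilityTheory
open scoped ENNReal Classical

/-- Local discrepancy of P in the box [0,(z(u),1)), whose Lebesgue measure is ∏_{i∈u} z i. -/
noncomputable def wLocDisc {d N : ℕ} (P : Fin N → (Fin d → ℝ)) (u : Finset (Fin d))
    (z : Fin d → ℝ) : ℝ :=
  |((Finset.univ.filter fun j =>
      ∀ i, 0 ≤ P j i ∧ P j i < (if i ∈ u then z i else 1)).card : ℝ) / N - ∏ i ∈ u, z i|

/-- Star discrepancy of the projection of P onto the coordinates in u. -/
noncomputable def projStarDisc {d N : ℕ} (P : Fin N → (Fin d → ℝ)) (u : Finset (Fin d)) : ℝ :=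
  ⨆ z : Set.Icc (0 : Fin d → ℝ) 1, wLocDisc P u (z : Fin d → ℝ)

/-- Weighted star discrepancy of P with weights γw. -/
noncomputable def weightedStarDisc {d N : ℕ} (P : Fin N → (Fin d → ℝ))
    (γw : Finset (Fin d) → ℝ) : ℝ :=
  ⨆ z : Set.Icc (0 : Fin d → ℝ) 1, ⨆ u : {u : Finset (Fin d) // u.Nonempty},
    γw u * wLocDisc P u (z : Fin d → ℝ)

lemma wLocDisc_le_one {d N : ℕ} (P : Fin N → (Fin d → ℝ)) (u : Finset (Fin d))
    {z : Fin d → ℝ} (hz : z ∈ Set.Icc (0 : Fin d → ℝ) 1) : wLocDisc P u z ≤ 1 := by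
  obtain ⟨hz0, hz1⟩ := hz
  set a : ℝ := ((Finset.univ.filter fun j =>
      ∀ i, 0 ≤ P j i ∧ P j i < (if i ∈ u then z i else 1)).card : ℝ) / N with ha
  have ha0 : 0 ≤ a := by positivity
  have ha1 : a ≤ 1 := by
    rw [ha]
    rcases Nat.eq_zero_or_pos N with h | h
    · simp [h]
    · rw [div_le_one (by exact_mod_cast h)]
      exact_mod_cast (Finset.card_filter_le _ _).trans (by simp)
  have hb0 : (0:ℝ) ≤ ∏ i ∈ u, z i := Finset.prod_nonneg fun i _ => hz0 i
  have hb1 : (∏ i ∈ u, z i) ≤ 1 := Finset.prod_le_one (fun i _ => hz0 i) (fun i _ => hz1 i)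
  rw [wLocDisc, abs_sub_le_iff]
  constructor <;> linarith

lemma sum_pow_card {d : ℕ} (q : ℝ) :
    ∑ u : Finset (Fin d), q ^ u.card = (1 + q) ^ d := by
  have := Finset.prod_add (fun _ : Fin d => q) (fun _ : Fin d => 1) Finset.univ
  simp only [Finset.prod_const, one_pow, mul_one, Finset.powerset_univ,
    Finset.card_univ, Fintype.card_fin] at this
  rw [add_comm]
  exact this.symm

lemma sum_pow_card_nonempty {d : ℕ} (q : ℝ) :
    ∑ u : {u : Finset (Fin d) // u.Nonempty}, q ^ (u : Finset (Fin d)).card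
      = (1 + q) ^ d - 1 := by
  have h1 : ∑ u ∈ (Finset.univ : Finset (Finset (Fin d))).erase ∅, q ^ u.card
      = ∑ u : {u : Finset (Fin d) // u.Nonempty}, q ^ (u : Finset (Fin d)).card := by
    apply Finset.sum_subtype
    intro x
    simp [Finset.nonempty_iff_ne_empty]
  have h2 := Finset.add_sum_erase Finset.univ (fun u : Finset (Fin d) => q ^ u.card)
    (Finset.mem_univ ∅)
  rw [← h1]
  have h3 := sum_pow_card (d := d) q
  simp only [Finset.card_empty, pow_zero] at h2
  linarith

/-- Probabilistic bound on the weighted star discrepancy for sampling schemes all of whose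
projections are D_0-e^{ρ|u|}-negatively dependent. -/
theorem stmt_16 {Ω : Type*} [MeasureSpace Ω] [IsProbabilityMeasure (ℙ : Measure Ω)]
    {d N : ℕ} (hd : 0 < d) (hN : 0 < N) (ρ : ℝ) (hρ : 0 ≤ ρ)
    (p : Fin N → Ω → (Fin d → ℝ)) (hmeas : ∀ j, Measurable (p j))
    -- sampling scheme: uniform marginals and exchangeability
    (hunif : ∀ j, Measure.map (p j) ℙ = Measure.pi fun _ => volume.restrict (Set.Ico (0 : ℝ) 1))
    (hexch : ∀ π : Equiv.Perm (Fin N),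
      Measure.map (fun ω (j : Fin N) => p (π j) ω) ℙ = Measure.map (fun ω j => p j ω) ℙ)
    -- every projection onto coordinates in u is D_0^{|u|}-e^{ρ|u|}-negatively dependent
    (hnegdep : ∀ u : Finset (Fin d), u.Nonempty →
      ∀ a b : Fin d → ℝ, (∀ i, a i ∈ Set.Ico (0 : ℝ) 1) → (∀ i, b i ∈ Set.Ico (0 : ℝ) 1) →
        ∀ v : Finset (Fin N),
          (ℙ (⋂ j ∈ v, {ω | (∀ i ∈ u, 0 ≤ p j ω i ∧ p j ω i < a i) ∧
              ¬ ∀ i ∈ u, 0 ≤ p j ω i ∧ p j ω i < b i}) ≤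
            ENNReal.ofReal (Real.exp (ρ * u.card)) *
              ∏ j ∈ v, ℙ {ω | (∀ i ∈ u, 0 ≤ p j ω i ∧ p j ω i < a i) ∧
                ¬ ∀ i ∈ u, 0 ≤ p j ω i ∧ p j ω i < b i}) ∧
          (ℙ (⋂ j ∈ v, {ω | ¬((∀ i ∈ u, 0 ≤ p j ω i ∧ p j ω i < a i) ∧
              ¬ ∀ i ∈ u, 0 ≤ p j ω i ∧ p j ω i < b i)}) ≤
            ENNReal.ofReal (Real.exp (ρ * u.card)) *
              ∏ j ∈ v, ℙ {ω | ¬((∀ i ∈ u, 0 ≤ p j ω i ∧ p j ω i < a i) ∧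
                ¬ ∀ i ∈ u, 0 ≤ p j ω i ∧ p j ω i < b i)}))
    -- the probabilistic bound from Theorem main_theo_GH, applied to each projection
    (htail : ∀ u : Finset (Fin d), u.Nonempty → ∀ c : ℝ, 0 < c →
      ℙ {ω | projStarDisc (fun j => p j ω) u > c * Real.sqrt (u.card / N)} <
        ENNReal.ofReal (Real.exp (-(1.674 * c ^ 2 - 10.7042 - ρ) * u.card)))
    (γw : Finset (Fin d) → ℝ) (hγw : ∀ u, 0 ≤ γw u) (c : ℝ) (hc : 0 < c) :
    ℙ {ω | weightedStarDisc (fun j => p j ω) γw ≤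
        ⨆ u : {u : Finset (Fin d) // u.Nonempty},
          c * γw u * Real.sqrt ((u : Finset (Fin d)).card / N)} ≥
      ENNReal.ofReal (2 - (1 + Real.exp (-(1.674 * c ^ 2 - 10.7042 - ρ))) ^ d) := by
  haveI : Nonempty (Set.Icc (0 : Fin d → ℝ) 1) := ⟨⟨0, Set.left_mem_Icc.2 zero_le_one⟩⟩
  haveI : Nonempty {u : Finset (Fin d) // u.Nonempty} :=
    ⟨⟨{⟨0, hd⟩}, Finset.singleton_nonempty _⟩⟩
  set q := Real.exp (-(1.674 * c ^ 2 - 10.7042 - ρ)) with hq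
  have hq0 : 0 < q := Real.exp_pos _
  set bad : {u : Finset (Fin d) // u.Nonempty} → Set Ω := fun u =>
    {ω | projStarDisc (fun j => p j ω) u > c * Real.sqrt ((u : Finset (Fin d)).card / N)}
    with hbaddef
  -- inclusion
  have hsub : (⋃ u, bad u)ᶜ ⊆ {ω | weightedStarDisc (fun j => p j ω) γw ≤
      ⨆ u : {u : Finset (Fin d) // u.Nonempty},
        c * γw u * Real.sqrt ((u : Finset (Fin d)).card / N)} := by
    intro ω hω
    simp only [Set.mem_compl_iff, Set.mem_iUnion, not_exists, hbaddef, Set.mem_setOf_eq,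
      not_lt] at hω
    simp only [Set.mem_setOf_eq, weightedStarDisc]
    apply ciSup_le
    intro z
    apply ciSup_le
    intro u
    have hbdd : BddAbove (Set.range fun z : Set.Icc (0 : Fin d → ℝ) 1 =>
        wLocDisc (fun j => p j ω) (u : Finset (Fin d)) (z : Fin d → ℝ)) :=
      ⟨1, Set.forall_mem_range.2 fun z => wLocDisc_le_one _ _ z.2⟩
    have h1 : wLocDisc (fun j => p j ω) (u : Finset (Fin d)) (z : Fin d → ℝ) ≤
        projStarDisc (fun j => p j ω) (u : Finset (Fin d)) := le_ciSup hbdd z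
    have h2 : γw u * wLocDisc (fun j => p j ω) (u : Finset (Fin d)) (z : Fin d → ℝ) ≤
        c * γw u * Real.sqrt ((u : Finset (Fin d)).card / N) := by
      calc γw u * wLocDisc (fun j => p j ω) (u : Finset (Fin d)) (z : Fin d → ℝ)
          ≤ γw u * (c * Real.sqrt ((u : Finset (Fin d)).card / N)) :=
            mul_le_mul_of_nonneg_left (h1.trans (hω u)) (hγw u)
        _ = c * γw u * Real.sqrt ((u : Finset (Fin d)).card / N) := by ring
    exact h2.trans (le_ciSup (f := fun u : {u : Finset (Fin d) // u.Nonempty} =>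
      c * γw u * Real.sqrt (((u : Finset (Fin d)).card : ℝ) / N))
      (Set.Finite.bddAbove (Set.finite_range _)) u)
  -- union bound
  have hbad : ∀ u : {u : Finset (Fin d) // u.Nonempty},
      ℙ (bad u) ≤ ENNReal.ofReal (q ^ (u : Finset (Fin d)).card) := by
    intro u
    have h := (htail u u.2 c hc).le
    rwa [show (-(1.674 * c ^ 2 - 10.7042 - ρ) * ((u : Finset (Fin d)).card : ℝ)) =
        (((u : Finset (Fin d)).card : ℝ)) * (-(1.674 * c ^ 2 - 10.7042 - ρ)) from mul_comm _ _,
      Real.exp_nat_mul] at h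
  have hB : ℙ (⋃ u, bad u) ≤ ENNReal.ofReal ((1 + q) ^ d - 1) := by
    calc ℙ (⋃ u, bad u) ≤ ∑' u, ℙ (bad u) := measure_iUnion_le _
      _ ≤ ∑' u : {u : Finset (Fin d) // u.Nonempty},
          ENNReal.ofReal (q ^ (u : Finset (Fin d)).card) := ENNReal.tsum_le_tsum hbad
      _ = ENNReal.ofReal (∑ u : {u : Finset (Fin d) // u.Nonempty},
          q ^ (u : Finset (Fin d)).card) := by
          rw [tsum_fintype, ← ENNReal.ofReal_sum_of_nonneg]
          intro i _
          positivity
      _ = ENNReal.ofReal ((1 + q) ^ d - 1) := by rw [sum_pow_card_nonempty]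
  have hpow1 : (1:ℝ) ≤ (1 + q) ^ d := one_le_pow₀ (by linarith)
  have hx0 : 0 ≤ (1 + q) ^ d - 1 := by linarith
  calc ENNReal.ofReal (2 - (1 + q) ^ d)
      = 1 - ENNReal.ofReal ((1 + q) ^ d - 1) := by
        rw [← ENNReal.ofReal_one, ← ENNReal.ofReal_sub _ hx0]
        ring_nf
    _ ≤ 1 - ℙ (⋃ u, bad u) := tsub_le_tsub_left hB 1
    _ ≤ ℙ ((⋃ u, bad u)ᶜ) := by
        rw [tsub_le_iff_right]
        calc (1:ℝ≥0∞) = ℙ (Set.univ) := measure_univ.symm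
          _ ≤ ℙ ((⋃ u, bad u)ᶜ ∪ ⋃ u, bad u) := measure_mono fun x _ => by
              by_cases hx : x ∈ ⋃ u, bad u
              exacts [Or.inr hx, Or.inl hx]
          _ ≤ ℙ ((⋃ u, bad u)ᶜ) + ℙ (⋃ u, bad u) := measure_union_le _ _
    _ ≤ _ := measure_mono hsub
end

section
/- Let d ≥ 2 and consider a two-point, two-strata stratified sampling scheme (p_1,p_2) in [0,1)^d where B_1, B_2 partition [0,1)^d into sets of measure 1/2, one point is placed uniformly in each stratum, and the assignment is randomized. If there exist boxes Q, R ∈ C_1^d with Q ⊆ B_1, B_2 ⊆ R, and R ≠ [0,1)^d with λ^d(Q) > 0, then the scheme is not pairwise negatively dependent: P(p_1 ∈ Q, p_2 ∈ R) > P(p_1 ∈ Q)P(p_2 ∈ R). -/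
/-! Since `Q ⊆ B₁`, the event `p₁ ∈ Q` forces the coin to put `p₂` in `B₂ ⊆ R`, so
`P(p₁ ∈ Q, p₂ ∈ R) = P(p₁ ∈ Q) = λ(Q)`. Each point is marginally uniform on the unit cube, so
`P(p₂ ∈ R) = λ(R)`, which is `< 1` because `R` is a proper anchored box. As `0 < λ(Q) < ∞`,
`λ(Q) λ(R) < λ(Q)`. -/

open MeasureTheory ProbabilityTheory Set
open scoped ENNReal

theorem volume_pi_Ico_one_lt_one {ι : Type*} [Fintype ι] {b : ι → ℝ} (hb : ∀ i, 0 ≤ b i)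
    {j : ι} (hj : 0 < b j) : volume (univ.pi fun i => Ico (b i) 1) < 1 := by
  classical
  rw [Real.volume_pi_Ico, ← Finset.mul_prod_erase _ _ (Finset.mem_univ j)]
  calc ENNReal.ofReal (1 - b j) * ∏ i ∈ Finset.univ.erase j, ENNReal.ofReal (1 - b i)
      ≤ ENNReal.ofReal (1 - b j) * 1 := by
        gcongr
        exact Finset.prod_le_one' fun i _ => ENNReal.ofReal_le_one.mpr (by linarith [hb i])
    _ < 1 := by rw [mul_one]; exact ENNReal.ofReal_lt_one.mpr (by linarith)

theorem exists_pos_of_pi_Ico_ne_unitCube {ι : Type*} {b : ι → ℝ} (hb : ∀ i, 0 ≤ b i)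
    (hne : (univ.pi fun i => Ico (b i) 1) ≠ univ.pi fun _ => Ico (0 : ℝ) 1) :
    ∃ j, 0 < b j := by
  by_contra! h
  have hb0 : b = 0 := funext fun i => le_antisymm (h i) (hb i)
  exact hne (by rw [hb0]; rfl)

section StratifiedPair

variable {α : Type*} [MeasurableSpace α]

noncomputable def stratifiedPairLaw (μ : Measure α) (B₁ B₂ : Set α) : Measure (α × α) :=
  (2 : ℝ≥0∞)⁻¹ • (((2 : ℝ≥0∞) • μ.restrict B₁).prod ((2 : ℝ≥0∞) • μ.restrict B₂)) +
    (2 : ℝ≥0∞)⁻¹ • (((2 : ℝ≥0∞) • μ.restrict B₂).prod ((2 : ℝ≥0∞) • μ.restrict B₁))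

variable {μ : Measure α} [SFinite μ] {B₁ B₂ S T : Set α}

theorem stratifiedPairLaw_prod (hS : MeasurableSet S) (hT : MeasurableSet T) :
    stratifiedPairLaw μ B₁ B₂ (S ×ˢ T) =
      2 * (μ (S ∩ B₁) * μ (T ∩ B₂) + μ (S ∩ B₂) * μ (T ∩ B₁)) := by
  simp only [stratifiedPairLaw, Measure.add_apply, Measure.smul_apply, Measure.prod_prod,
    Measure.restrict_apply hS, Measure.restrict_apply hT, smul_eq_mul]
  have halve (x y : ℝ≥0∞) : 2⁻¹ * (2 * x * (2 * y)) = 2 * (x * y) := by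
    rw [show 2⁻¹ * (2 * x * (2 * y)) = 2⁻¹ * 2 * (2 * (x * y)) by ring,
      ENNReal.inv_mul_cancel two_ne_zero ENNReal.ofNat_ne_top, one_mul]
  rw [halve, halve, mul_add]

theorem stratifiedPairLaw_prod_of_subset (hdisj : Disjoint B₁ B₂) (hvol₂ : μ B₂ = 2⁻¹)
    (hS : MeasurableSet S) (hT : MeasurableSet T) (hSB₁ : S ⊆ B₁) (hB₂T : B₂ ⊆ T) :
    stratifiedPairLaw μ B₁ B₂ (S ×ˢ T) = μ S := by
  rw [stratifiedPairLaw_prod hS hT, inter_eq_left.mpr hSB₁, inter_eq_right.mpr hB₂T,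
    (hdisj.mono_left hSB₁).inter_eq, hvol₂, measure_empty, zero_mul, add_zero, mul_comm,
    mul_assoc, ENNReal.inv_mul_cancel two_ne_zero ENNReal.ofNat_ne_top, mul_one]

theorem stratifiedPairLaw_univ_prod (hB₂ : MeasurableSet B₂) (hdisj : Disjoint B₁ B₂)
    (hvol₁ : μ B₁ = 2⁻¹) (hvol₂ : μ B₂ = 2⁻¹) (hT : MeasurableSet T) :
    stratifiedPairLaw μ B₁ B₂ (univ ×ˢ T) = μ (T ∩ (B₁ ∪ B₂)) := by
  rw [stratifiedPairLaw_prod MeasurableSet.univ hT, univ_inter, univ_inter, hvol₁, hvol₂,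
    ← mul_add, ← mul_assoc, ENNReal.mul_inv_cancel two_ne_zero ENNReal.ofNat_ne_top, one_mul,
    add_comm, inter_union_distrib_left,
    measure_union (hdisj.mono inter_subset_right inter_subset_right) (hT.inter hB₂)]

end StratifiedPair

theorem stmt_18_general {Ω : Type*} [MeasureSpace Ω]
    {d : ℕ}
    (B₁ B₂ : Set (Fin d → ℝ)) (hB₂ : MeasurableSet B₂)
    (hdisj : Disjoint B₁ B₂)
    (hunion : B₁ ∪ B₂ = Set.univ.pi fun _ => Set.Ico (0 : ℝ) 1)
    (hvol₁ : volume B₁ = 2⁻¹) (hvol₂ : volume B₂ = 2⁻¹)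
    (p₁ p₂ : Ω → (Fin d → ℝ)) (h₁ : Measurable p₁) (h₂ : Measurable p₂)
    -- the joint law: a fair coin decides which point goes to which stratum, then the two
    -- points are placed independently and uniformly in their strata
    (hlaw : Measure.map (fun ω => (p₁ ω, p₂ ω)) ℙ =
      ((2 : ℝ≥0∞))⁻¹ • (((2 : ℝ≥0∞) • volume.restrict B₁).prod ((2 : ℝ≥0∞) • volume.restrict B₂)) +
      ((2 : ℝ≥0∞))⁻¹ • (((2 : ℝ≥0∞) • volume.restrict B₂).prod ((2 : ℝ≥0∞) • volume.restrict B₁)))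
    (a b : Fin d → ℝ) (hb : ∀ i, b i ∈ Set.Ico (0 : ℝ) 1)
    -- Q = [a,1), R = [b,1)
    (hQB₁ : {x : Fin d → ℝ | ∀ i, a i ≤ x i ∧ x i < 1} ⊆ B₁)
    (hB₂R : B₂ ⊆ {x : Fin d → ℝ | ∀ i, b i ≤ x i ∧ x i < 1})
    (hRne : {x : Fin d → ℝ | ∀ i, b i ≤ x i ∧ x i < 1} ≠
      Set.univ.pi fun _ => Set.Ico (0 : ℝ) 1)
    (hQpos : 0 < volume {x : Fin d → ℝ | ∀ i, a i ≤ x i ∧ x i < 1}) :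
    ℙ ({ω | ∀ i, a i ≤ p₁ ω i ∧ p₁ ω i < 1} ∩ {ω | ∀ i, b i ≤ p₂ ω i ∧ p₂ ω i < 1}) >
      ℙ {ω | ∀ i, a i ≤ p₁ ω i ∧ p₁ ω i < 1} * ℙ {ω | ∀ i, b i ≤ p₂ ω i ∧ p₂ ω i < 1} := by
  set Q := {x : Fin d → ℝ | ∀ i, a i ≤ x i ∧ x i < 1}
  set R := {x : Fin d → ℝ | ∀ i, b i ≤ x i ∧ x i < 1}
  have hQ : Q = univ.pi fun i => Ico (a i) 1 := by ext; simp [Q, mem_pi]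
  have hR : R = univ.pi fun i => Ico (b i) 1 := by ext; simp [R, mem_pi]
  have hQm : MeasurableSet Q := hQ ▸ .univ_pi fun _ => measurableSet_Ico
  have hRm : MeasurableSet R := hR ▸ .univ_pi fun _ => measurableSet_Ico
  have hprob (S T : Set (Fin d → ℝ)) (hS : MeasurableSet S) (hT : MeasurableSet T) :
      ℙ (p₁ ⁻¹' S ∩ p₂ ⁻¹' T) = stratifiedPairLaw volume B₁ B₂ (S ×ˢ T) := by
    rw [stratifiedPairLaw, ← hlaw, Measure.map_apply (h₁.prodMk h₂) (hS.prod hT),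
      mk_preimage_prod]
  have hjoint : ℙ (p₁ ⁻¹' Q ∩ p₂ ⁻¹' R) = volume Q := by
    rw [hprob Q R hQm hRm, stratifiedPairLaw_prod_of_subset hdisj hvol₂ hQm hRm hQB₁ hB₂R]
  have hfst : ℙ (p₁ ⁻¹' Q) = volume Q := by
    rw [← inter_univ (p₁ ⁻¹' Q), ← preimage_univ (f := p₂), hprob Q univ hQm .univ,
      stratifiedPairLaw_prod_of_subset hdisj hvol₂ hQm .univ hQB₁ (subset_univ _)]
  have hsnd : ℙ (p₂ ⁻¹' R) = volume R := by
    have hRcube : R ⊆ B₁ ∪ B₂ := hunion ▸ hR ▸ pi_mono fun i _ => Ico_subset_Ico_left (hb i).1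
    rw [← univ_inter (p₂ ⁻¹' R), ← preimage_univ (f := p₁), hprob univ R .univ hRm,
      stratifiedPairLaw_univ_prod hB₂ hdisj hvol₁ hvol₂ hRm, inter_eq_left.mpr hRcube]
  obtain ⟨j, hj⟩ := exists_pos_of_pi_Ico_ne_unitCube (fun i => (hb i).1) (hR ▸ hRne)
  have hRlt : volume R < 1 := hR ▸ volume_pi_Ico_one_lt_one (fun i => (hb i).1) hj
  have hQfin : volume Q ≠ ∞ := ne_top_of_le_ne_top (by simp [hvol₁]) (measure_mono hQB₁)
  change ℙ (p₁ ⁻¹' Q ∩ p₂ ⁻¹' R) > ℙ (p₁ ⁻¹' Q) * ℙ (p₂ ⁻¹' R)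
  rw [hjoint, hfst, hsnd]
  simpa using (ENNReal.mul_lt_mul_iff_right hQpos.ne' hQfin).mpr hRlt

/-- A two-point stratified sampling scheme with two strata B₁, B₂ of measure 1/2 is not
pairwise negatively dependent when there are anchored-at-1 boxes Q ⊆ B₁ and R ⊇ B₂ with
R ≠ [0,1)^d and λ(Q) > 0. -/
theorem stmt_18 {Ω : Type*} [MeasureSpace Ω] [IsProbabilityMeasure (ℙ : Measure Ω)]
    {d : ℕ} (hd : 2 ≤ d)
    (B₁ B₂ : Set (Fin d → ℝ)) (hB₁ : MeasurableSet B₁) (hB₂ : MeasurableSet B₂)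
    (hdisj : Disjoint B₁ B₂)
    (hunion : B₁ ∪ B₂ = Set.univ.pi fun _ => Set.Ico (0 : ℝ) 1)
    (hvol₁ : volume B₁ = 2⁻¹) (hvol₂ : volume B₂ = 2⁻¹)
    (p₁ p₂ : Ω → (Fin d → ℝ)) (h₁ : Measurable p₁) (h₂ : Measurable p₂)
    -- the joint law: a fair coin decides which point goes to which stratum, then the two
    -- points are placed independently and uniformly in their strata
    (hlaw : Measure.map (fun ω => (p₁ ω, p₂ ω)) ℙ =
      ((2 : ℝ≥0∞))⁻¹ • (((2 : ℝ≥0∞) • volume.restrict B₁).prod ((2 : ℝ≥0∞) • volume.restrict B₂)) +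
      ((2 : ℝ≥0∞))⁻¹ • (((2 : ℝ≥0∞) • volume.restrict B₂).prod ((2 : ℝ≥0∞) • volume.restrict B₁)))
    (a b : Fin d → ℝ) (ha : ∀ i, a i ∈ Set.Ico (0 : ℝ) 1) (hb : ∀ i, b i ∈ Set.Ico (0 : ℝ) 1)
    -- Q = [a,1), R = [b,1)
    (hQB₁ : {x : Fin d → ℝ | ∀ i, a i ≤ x i ∧ x i < 1} ⊆ B₁)
    (hB₂R : B₂ ⊆ {x : Fin d → ℝ | ∀ i, b i ≤ x i ∧ x i < 1})
    (hRne : {x : Fin d → ℝ | ∀ i, b i ≤ x i ∧ x i < 1} ≠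
      Set.univ.pi fun _ => Set.Ico (0 : ℝ) 1)
    (hQpos : 0 < volume {x : Fin d → ℝ | ∀ i, a i ≤ x i ∧ x i < 1}) :
    ℙ ({ω | ∀ i, a i ≤ p₁ ω i ∧ p₁ ω i < 1} ∩ {ω | ∀ i, b i ≤ p₂ ω i ∧ p₂ ω i < 1}) >
      ℙ {ω | ∀ i, a i ≤ p₁ ω i ∧ p₁ ω i < 1} * ℙ {ω | ∀ i, b i ≤ p₂ ω i ∧ p₂ ω i < 1} :=
  stmt_18_general B₁ B₂ hB₂ hdisj hunion hvol₁ hvol₂ p₁ p₂ h₁ h₂ hlaw a b hb hQB₁ hB₂R hRne hQpos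
end
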